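/- arXiv:1409.0364 — 8 statements merged into one kernel-verified Lean document; each statement's English description precedes it below -/
import Mathlib

section
/- Let τ ∈ ℝ and γ > 0. Let y, f, g : [τ, ∞) → ℝ be nonnegative functions with f, g locally integrable, and assume y is differentiable on [τ, ∞) and satisfies the differential inequality y′(t) + γ·y(t) ≤ f(t)·y(t)^{1/2} + g(t) for every t ∈ [τ, ∞). Then for every t ∈ [τ, ∞): y(t) ≤ 2·y(τ)·e^{−γ(t−τ)} + (∫_τ^t f(s)·e^{−(γ/2)(t−s)} ds)² + 2·∫_τ^t g(s)·e^{−γ(t−s)} ds. -/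
open MeasureTheory Set Real

/-- Gronwall-type inequality with square-root nonlinearity:
if `y' + γ y ≤ f √y + g` on `[τ, ∞)` with `y, f, g ≥ 0`, then
`y t ≤ 2 y(τ) e^{-γ(t-τ)} + (∫_τ^t f(s) e^{-(γ/2)(t-s)} ds)² + 2 ∫_τ^t g(s) e^{-γ(t-s)} ds`. -/
theorem gronwall_sqrt (τ γ : ℝ) (hγ : 0 < γ) (y y' f g : ℝ → ℝ)
    (hy : ∀ t ∈ Ici τ, 0 ≤ y t)
    (hf : ∀ t ∈ Ici τ, 0 ≤ f t) (hg : ∀ t ∈ Ici τ, 0 ≤ g t)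
    (hfloc : LocallyIntegrableOn f (Ici τ))
    (hgloc : LocallyIntegrableOn g (Ici τ))
    (hderiv : ∀ t ∈ Ici τ, HasDerivAt y (y' t) t)
    (hineq : ∀ t ∈ Ici τ, y' t + γ * y t ≤ f t * y t ^ ((1 : ℝ) / 2) + g t) :
    ∀ t ∈ Ici τ,
      y t ≤ 2 * y τ * exp (-γ * (t - τ))
        + (∫ s in τ..t, f s * exp (-(γ / 2) * (t - s))) ^ 2
        + 2 * ∫ s in τ..t, g s * exp (-γ * (t - s)) := by
  intro t ht
  rw [mem_Ici] at ht
  -- weighted functions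
  set z : ℝ → ℝ := fun s => y s * exp (γ * (s - τ)) with hz_def
  set F : ℝ → ℝ := fun s => f s * exp (γ / 2 * (s - τ)) with hF_def
  set G : ℝ → ℝ := fun s => g s * exp (γ * (s - τ)) with hG_def
  set φ : ℝ → ℝ := fun s => F s * Real.sqrt (z s) + G s with hφ_def
  -- continuity of y, z, sqrt z on Ici τ
  have hycont : ContinuousOn y (Ici τ) := fun x hx =>
    ((hderiv x hx).continuousAt).continuousWithinAt
  have hexpcont : ∀ c : ℝ, Continuous (fun s : ℝ => exp (c * (s - τ))) := fun c =>
    Real.continuous_exp.comp (continuous_const.mul (continuous_id.sub continuous_const))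
  have hzcont : ContinuousOn z (Ici τ) := hycont.mul ((hexpcont γ).continuousOn)
  have hsqrtzcont : ContinuousOn (fun s => Real.sqrt (z s)) (Ici τ) :=
    Real.continuous_sqrt.comp_continuousOn hzcont
  have hIccsub : Icc τ t ⊆ Ici τ := Icc_subset_Ici_self
  -- integrability
  have hfInt : IntegrableOn f (Icc τ t) :=
    hfloc.integrableOn_compact_subset hIccsub isCompact_Icc
  have hgInt : IntegrableOn g (Icc τ t) :=
    hgloc.integrableOn_compact_subset hIccsub isCompact_Icc
  have hFInt : IntegrableOn F (Icc τ t) :=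
    hfInt.mul_continuousOn ((hexpcont (γ/2)).continuousOn) isCompact_Icc
  have hGInt : IntegrableOn G (Icc τ t) :=
    hgInt.mul_continuousOn ((hexpcont γ).continuousOn) isCompact_Icc
  have hFsInt : IntegrableOn (fun s => F s * Real.sqrt (z s)) (Icc τ t) :=
    hFInt.mul_continuousOn (hsqrtzcont.mono hIccsub) isCompact_Icc
  have hφInt : IntegrableOn φ (Icc τ t) := hFsInt.add hGInt
  -- nonnegativity of z, F, G, φ on Ici τ
  have hznn : ∀ s ∈ Ici τ, 0 ≤ z s := fun s hs => mul_nonneg (hy s hs) (exp_nonneg _)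
  have hFnn : ∀ s ∈ Ici τ, 0 ≤ F s := fun s hs => mul_nonneg (hf s hs) (exp_nonneg _)
  have hGnn : ∀ s ∈ Ici τ, 0 ≤ G s := fun s hs => mul_nonneg (hg s hs) (exp_nonneg _)
  have hφnn : ∀ s ∈ Ici τ, 0 ≤ φ s := fun s hs =>
    add_nonneg (mul_nonneg (hFnn s hs) (Real.sqrt_nonneg _)) (hGnn s hs)
  -- the derivative bound for z
  have hzderiv : ∀ x ∈ Ici τ,
      HasDerivAt z (y' x * exp (γ * (x - τ)) + y x * (γ * exp (γ * (x - τ)))) x := by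
    intro x hx
    have he : HasDerivAt (fun s : ℝ => exp (γ * (s - τ))) (γ * exp (γ * (x - τ))) x := by
      have h1 : HasDerivAt (fun s : ℝ => γ * (s - τ)) γ x := by
        simpa using ((hasDerivAt_id x).sub_const τ).const_mul γ
      simpa [mul_comm] using h1.exp
    exact (hderiv x hx).mul he
  have hzderiv_le : ∀ x ∈ Ici τ,
      y' x * exp (γ * (x - τ)) + y x * (γ * exp (γ * (x - τ))) ≤ φ x := by
    intro x hx
    have h1 := hineq x hx
    have hyx := hy x hx
    have hsq : y x ^ ((1 : ℝ) / 2) = Real.sqrt (y x) := (Real.sqrt_eq_rpow (y x)).symm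
    have hsqz : Real.sqrt (z x) = Real.sqrt (y x) * exp (γ / 2 * (x - τ)) := by
      have : exp (γ * (x - τ)) = exp (γ / 2 * (x - τ)) ^ 2 := by
        rw [sq, ← Real.exp_add]; ring_nf
      rw [hz_def]
      simp only
      rw [this, Real.sqrt_mul hyx, Real.sqrt_sq (exp_nonneg _)]
    have e2 : exp (γ / 2 * (x - τ)) * exp (γ / 2 * (x - τ)) = exp (γ * (x - τ)) := by
      rw [← Real.exp_add]; ring_nf
    have hφx : φ x = (f x * Real.sqrt (y x) + g x) * exp (γ * (x - τ)) := by
      simp only [hφ_def, hF_def, hG_def, hsqz]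
      rw [← e2]; ring
    have h3 : y' x + γ * y x ≤ f x * Real.sqrt (y x) + g x := by
      rw [← hsq]; exact h1
    rw [hφx]
    calc y' x * exp (γ * (x - τ)) + y x * (γ * exp (γ * (x - τ)))
        = (y' x + γ * y x) * exp (γ * (x - τ)) := by ring
      _ ≤ (f x * Real.sqrt (y x) + g x) * exp (γ * (x - τ)) :=
          mul_le_mul_of_nonneg_right h3 (exp_nonneg _)
  -- FTC-type inequality: z σ - z τ ≤ ∫_τ^σ φ for σ ∈ [τ, t]
  have key : ∀ σ ∈ Icc τ t, z σ - z τ ≤ ∫ s in τ..σ, φ s := by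
    intro σ hσ
    refine intervalIntegral.sub_le_integral_of_hasDeriv_right_of_le
      (g' := fun x => y' x * exp (γ * (x - τ)) + y x * (γ * exp (γ * (x - τ)))) hσ.1
      (hzcont.mono (Icc_subset_Ici_self)) (fun x hx => ?_)
      (hφInt.mono_set (Icc_subset_Icc le_rfl hσ.2)) (fun x hx => ?_)
    · exact (hzderiv x (le_of_lt hx.1)).hasDerivWithinAt
    · exact hzderiv_le x (le_of_lt hx.1)
  -- interval integrability
  have huIcc : uIcc τ t = Icc τ t := uIcc_of_le ht
  have hφII : IntervalIntegrable φ volume τ t :=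
    IntegrableOn.intervalIntegrable (by rwa [huIcc])
  have hFII : IntervalIntegrable F volume τ t :=
    IntegrableOn.intervalIntegrable (by rwa [huIcc])
  have hGII : IntervalIntegrable G volume τ t :=
    IntegrableOn.intervalIntegrable (by rwa [huIcc])
  have hFsII : IntervalIntegrable (fun s => F s * Real.sqrt (z s)) volume τ t :=
    IntegrableOn.intervalIntegrable (by rwa [huIcc])
  -- define M and show z σ ≤ M on [τ, t]
  set M : ℝ := y τ + ∫ s in τ..t, φ s with hM_def
  have hIntnn : ∀ a b, τ ≤ a → a ≤ b → b ≤ t → 0 ≤ ∫ s in a..b, φ s := by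
    intro a b hτa hab hbt
    apply intervalIntegral.integral_nonneg hab
    intro u hu
    exact hφnn u (le_trans hτa hu.1)
  have hzM : ∀ σ ∈ Icc τ t, z σ ≤ M := by
    intro σ hσ
    have h1 := key σ hσ
    have h2 : (∫ s in τ..σ, φ s) ≤ ∫ s in τ..t, φ s := by
      have hφIIσ : IntervalIntegrable φ volume τ σ :=
        hφII.mono_set (by rw [huIcc, uIcc_of_le hσ.1]; exact Icc_subset_Icc le_rfl hσ.2)
      have hφIIσt : IntervalIntegrable φ volume σ t :=
        hφII.mono_set (by rw [huIcc, uIcc_of_le hσ.2]; exact Icc_subset_Icc hσ.1 le_rfl)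
      have := intervalIntegral.integral_add_adjacent_intervals hφIIσ hφIIσt
      have h3 := hIntnn σ t hσ.1 hσ.2 le_rfl
      linarith
    have hzτ : z τ = y τ := by simp [hz_def]
    rw [hzτ] at h1
    linarith
  have hMnn : 0 ≤ M := by
    have := hzM τ ⟨le_rfl, ht⟩
    have := hznn τ (mem_Ici.mpr le_rfl)
    linarith
  -- bound the integral of F √z by √M * ∫F
  set k : ℝ := ∫ s in τ..t, F s with hk_def
  set B : ℝ := ∫ s in τ..t, G s with hB_def
  have hknn : 0 ≤ k := intervalIntegral.integral_nonneg ht (fun u hu => hFnn u hu.1)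
  have hBnn : 0 ≤ B := intervalIntegral.integral_nonneg ht (fun u hu => hGnn u hu.1)
  have hFsbound : (∫ s in τ..t, F s * Real.sqrt (z s)) ≤ Real.sqrt M * k := by
    have : (∫ s in τ..t, F s * Real.sqrt (z s)) ≤ ∫ s in τ..t, F s * Real.sqrt M := by
      apply intervalIntegral.integral_mono_on ht hFsII (hFII.mul_const _)
      intro x hx
      exact mul_le_mul_of_nonneg_left
        (Real.sqrt_le_sqrt (hzM x hx)) (hFnn x hx.1)
    calc (∫ s in τ..t, F s * Real.sqrt (z s)) ≤ ∫ s in τ..t, F s * Real.sqrt M := this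
      _ = k * Real.sqrt M := intervalIntegral.integral_mul_const _ _
      _ = Real.sqrt M * k := mul_comm _ _
  -- self-referential bound on M
  have hsplit : (∫ s in τ..t, φ s) = (∫ s in τ..t, F s * Real.sqrt (z s)) + B := by
    rw [hφ_def, hB_def]
    exact intervalIntegral.integral_add hFsII hGII
  have hMle : M ≤ y τ + Real.sqrt M * k + B := by
    have hMeq : M = y τ + (∫ s in τ..t, F s * Real.sqrt (z s)) + B := by
      rw [hM_def, hsplit]; ring
    linarith [hFsbound]
  have hMsq : Real.sqrt M ^ 2 = M := Real.sq_sqrt hMnn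
  have hMfinal : M ≤ 2 * y τ + k ^ 2 + 2 * B := by
    nlinarith [sq_nonneg (Real.sqrt M - k), Real.sqrt_nonneg M]
  -- conclude for z t, then convert back to y
  have hzt : z t ≤ 2 * y τ + k ^ 2 + 2 * B := le_trans (hzM t ⟨ht, le_rfl⟩) hMfinal
  have hyt : y t ≤ (2 * y τ + k ^ 2 + 2 * B) * exp (-γ * (t - τ)) := by
    have hexp : 0 < exp (γ * (t - τ)) := exp_pos _
    have h1 : y t = z t * exp (-γ * (t - τ)) := by
      rw [hz_def]
      simp only
      rw [mul_assoc, ← Real.exp_add]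
      simp
    rw [h1]
    exact mul_le_mul_of_nonneg_right hzt (exp_nonneg _)
  -- rewrite the weighted integrals
  have hkeq : k * exp (-(γ / 2) * (t - τ)) = ∫ s in τ..t, f s * exp (-(γ / 2) * (t - s)) := by
    rw [hk_def, ← intervalIntegral.integral_mul_const]
    apply intervalIntegral.integral_congr
    intro x _
    simp only [hF_def]
    rw [mul_assoc, ← Real.exp_add]
    ring_nf
  have hBeq : B * exp (-γ * (t - τ)) = ∫ s in τ..t, g s * exp (-γ * (t - s)) := by
    rw [hB_def, ← intervalIntegral.integral_mul_const]
    apply intervalIntegral.integral_congr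
    intro x _
    simp only [hG_def]
    rw [mul_assoc, ← Real.exp_add]
    ring_nf
  have hexpsq : exp (-γ * (t - τ)) = exp (-(γ / 2) * (t - τ)) ^ 2 := by
    rw [sq, ← Real.exp_add]; ring_nf
  calc y t ≤ (2 * y τ + k ^ 2 + 2 * B) * exp (-γ * (t - τ)) := hyt
    _ = 2 * y τ * exp (-γ * (t - τ)) + (k * exp (-(γ / 2) * (t - τ))) ^ 2
        + 2 * (B * exp (-γ * (t - τ))) := by rw [hexpsq]; ring
    _ = 2 * y τ * exp (-γ * (t - τ))
        + (∫ s in τ..t, f s * exp (-(γ / 2) * (t - s))) ^ 2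
        + 2 * ∫ s in τ..t, g s * exp (-γ * (t - s)) := by rw [hkeq, hBeq]
end

section
/- Let τ ∈ ℝ and γ > 0. Let y, f, g : [τ, ∞) → ℝ be nonnegative functions with f, g locally integrable, and assume y is differentiable on [τ, ∞) and satisfies y′(t) + γ·y(t) ≤ f(t)·y(t)^{1/2} + g(t) for every t ∈ [τ, ∞). Assume in addition that sup_{t ≥ τ} ∫_t^{t+1} f(s) ds ≤ A₁ and sup_{t ≥ τ} ∫_t^{t+1} g(s) ds ≤ A₂ for some positive constants A₁, A₂. Then for every t ≥ τ: y(t) ≤ 2·y(τ)·e^{−γ(t−τ)} + Q(γ, A₁, A₂), where Q(γ, A₁, A₂) = ((e^{γ/2}/(1 − e^{−γ/2}))·A₁)² + (2·e^{γ}/(1 − e^{−γ}))·A₂. -/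
/-! Let `w s = exp (γ s) y s`, fix `T ≥ τ`, and let `W = w s₀` be the maximum of `w` on `[τ, T]`.
On `[τ, s₀]` we have `√(y s) ≤ exp (-γ s / 2) √W`, so integrating `w' ≤ exp (γ s) (f √y + g)`
gives `W ≤ w τ + √W ∫ exp (γ s / 2) f + ∫ exp (γ s) g`. Cutting `[τ, s₀]` into unit intervals
ending at `s₀` bounds these integrals by geometric series, `exp (γ s₀ / 2) A₁ / (1 - exp (-γ / 2))`
and `exp (γ s₀) A₂ / (1 - exp (-γ))`. Solving the resulting quadratic inequality in `√W` gives
`W ≤ 2 w τ + exp (γ s₀) Q'` with `Q' = (A₁ / (1 - exp (-γ / 2)))² + 2 A₂ / (1 - exp (-γ)) ≤ Q`,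
and `w T ≤ W` yields the bound after dividing by `exp (γ T)`. -/

open MeasureTheory Set Real

lemma MeasureTheory.LocallyIntegrableOn.intervalIntegrable_of_Ici {f : ℝ → ℝ} {a b c : ℝ}
    (hf : LocallyIntegrableOn f (Ici a)) (hb : a ≤ b) (hc : a ≤ c) :
    IntervalIntegrable f volume b c :=
  (hf.integrableOn_compact_subset (fun _ hx => (le_min hb hc).trans hx.1)
    isCompact_uIcc).intervalIntegrable

lemma MeasureTheory.LocallyIntegrableOn.intervalIntegrable_continuous_mul_of_Ici
    {f c : ℝ → ℝ} {a b d : ℝ}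
    (hf : LocallyIntegrableOn f (Ici a)) (hc : Continuous c) (hb : a ≤ b) (hd : a ≤ d) :
    IntervalIntegrable (fun s => c s * f s) volume b d :=
  ((hf.integrableOn_compact_subset (fun _ hx => (le_min hb hd).trans hx.1)
    isCompact_uIcc).continuousOn_mul hc.continuousOn isCompact_uIcc).intervalIntegrable

lemma one_sub_exp_neg_pos {α : ℝ} (hα : 0 < α) : 0 < 1 - exp (-α) :=
  sub_pos.2 (exp_lt_one_iff.2 (neg_neg_of_pos hα))

section TranslationBounded

variable {f : ℝ → ℝ} {a α A : ℝ}

lemma nonneg_of_integral_unit_le (hf : ∀ t ∈ Ici a, 0 ≤ f t)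
    (hA : ∀ r ∈ Ici a, ∫ s in r..r + 1, f s ≤ A) : 0 ≤ A :=
  (intervalIntegral.integral_nonneg (by linarith) fun s hs => hf s hs.1).trans
    (hA a self_mem_Ici)

lemma integral_exp_mul_le_of_le_add_one (hα : 0 ≤ α) (hf : ∀ t ∈ Ici a, 0 ≤ f t)
    (hfloc : LocallyIntegrableOn f (Ici a)) (hA : ∀ r ∈ Ici a, ∫ s in r..r + 1, f s ≤ A)
    {r t : ℝ} (hr : a ≤ r) (hrt : r ≤ t) (ht : t ≤ r + 1) :
    ∫ s in r..t, exp (α * s) * f s ≤ exp (α * t) * A := by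
  have hint := hfloc.intervalIntegrable_of_Ici hr (hr.trans hrt)
  calc ∫ s in r..t, exp (α * s) * f s ≤ ∫ s in r..t, exp (α * t) * f s := by
        refine intervalIntegral.integral_mono_on hrt
          (hfloc.intervalIntegrable_continuous_mul_of_Ici (by fun_prop) hr (hr.trans hrt))
          (hint.const_mul _) fun s hs => ?_
        gcongr
        · exact hf s (hr.trans hs.1)
        · exact hs.2
    _ = exp (α * t) * ∫ s in r..t, f s := intervalIntegral.integral_const_mul _ _
    _ ≤ exp (α * t) * ∫ s in r..r + 1, f s := by
        gcongr
        exact intervalIntegral.integral_mono_interval le_rfl hrt ht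
          (ae_restrict_of_forall_mem measurableSet_Ioc fun s hs => hf s (hr.trans hs.1.le))
          (hfloc.intervalIntegrable_of_Ici hr (by linarith))
    _ ≤ exp (α * t) * A := by gcongr; exact hA r hr

theorem integral_exp_mul_le (hα : 0 < α) (hf : ∀ t ∈ Ici a, 0 ≤ f t)
    (hfloc : LocallyIntegrableOn f (Ici a)) (hA : ∀ r ∈ Ici a, ∫ s in r..r + 1, f s ≤ A)
    {t : ℝ} (ht : a ≤ t) :
    ∫ s in a..t, exp (α * s) * f s ≤ exp (α * t) * (A / (1 - exp (-α))) := by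
  have hq := one_sub_exp_neg_pos hα
  have hA_le : A ≤ A / (1 - exp (-α)) :=
    (le_div_iff₀ hq).2 (by nlinarith [nonneg_of_integral_unit_le hf hA, exp_pos (-α)])
  suffices ∀ n : ℕ, ∀ t, a ≤ t → t ≤ a + 1 + n →
      ∫ s in a..t, exp (α * s) * f s ≤ exp (α * t) * (A / (1 - exp (-α))) from
    this ⌈t - a⌉₊ t ht (by linarith [Nat.le_ceil (t - a)])
  intro n
  induction n with
  | zero =>
    intro t ht ht'
    calc _ ≤ exp (α * t) * A :=
          integral_exp_mul_le_of_le_add_one hα.le hf hfloc hA le_rfl ht (by simpa using ht')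
      _ ≤ _ := by gcongr
  | succ n ih =>
    intro t ht ht'
    rcases le_or_gt t (a + 1 + n) with hle | hgt
    · exact ih t ht hle
    have hta : a ≤ t - 1 := by linarith [(Nat.cast_nonneg n : (0 : ℝ) ≤ n)]
    rw [← intervalIntegral.integral_add_adjacent_intervals
      (hfloc.intervalIntegrable_continuous_mul_of_Ici (by fun_prop) le_rfl hta)
      (hfloc.intervalIntegrable_continuous_mul_of_Ici (by fun_prop) hta ht)]
    calc _ ≤ exp (α * (t - 1)) * (A / (1 - exp (-α))) + exp (α * t) * A :=
          add_le_add (ih (t - 1) hta (by push_cast at ht'; linarith))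
            (integral_exp_mul_le_of_le_add_one hα.le hf hfloc hA hta (by linarith) (by linarith))
      _ = exp (α * t) * (A / (1 - exp (-α))) := by
          rw [show α * (t - 1) = α * t + -α by ring, exp_add]
          field_simp
          ring

end TranslationBounded

lemma le_two_mul_add_sq_add_two_mul {W a b c : ℝ} (hW : 0 ≤ W) (h : W ≤ a + √W * b + c) :
    W ≤ 2 * a + b ^ 2 + 2 * c := by
  nlinarith [sq_nonneg (√W - b), sq_sqrt hW]

lemma div_one_sub_exp_neg_le {α A : ℝ} (hα : 0 < α) (hA : 0 ≤ A) :
    A / (1 - exp (-α)) ≤ exp α / (1 - exp (-α)) * A := by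
  rw [div_mul_eq_mul_div]
  gcongr
  · exact (one_sub_exp_neg_pos hα).le
  nlinarith [one_le_exp hα.le]

section WeightedMaximum

variable {τ γ : ℝ} {y y' f g : ℝ → ℝ}

theorem exp_mul_le_add_sqrt_mul_integral_of_isMaxOn (hf : ∀ t ∈ Ici τ, 0 ≤ f t)
    (hfloc : LocallyIntegrableOn f (Ici τ))
    (hgloc : LocallyIntegrableOn g (Ici τ)) (hderiv : ∀ t ∈ Ici τ, HasDerivAt y (y' t) t)
    (hineq : ∀ t ∈ Ici τ, y' t + γ * y t ≤ f t * √(y t) + g t)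
    {s₀ : ℝ} (hs₀ : τ ≤ s₀) (hmax : IsMaxOn (fun s => exp (γ * s) * y s) (Icc τ s₀) s₀) :
    exp (γ * s₀) * y s₀ ≤ exp (γ * τ) * y τ
      + √(exp (γ * s₀) * y s₀) * (∫ s in τ..s₀, exp (γ / 2 * s) * f s)
      + ∫ s in τ..s₀, exp (γ * s) * g s := by
  set W := exp (γ * s₀) * y s₀
  have hw : ∀ s ∈ Ici τ, HasDerivAt (fun s => exp (γ * s) * y s)
      (exp (γ * s) * (y' s + γ * y s)) s := by
    intro s hs
    exact (((hasDerivAt_id' s).const_mul γ).exp.mul (hderiv s hs)).congr_deriv (by ring)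
  have hbound : ∀ s ∈ Icc τ s₀, exp (γ * s) * (y' s + γ * y s)
      ≤ √W * (exp (γ / 2 * s) * f s) + exp (γ * s) * g s := by
    intro s hs
    have hsqrt : exp (γ / 2 * s) * √(y s) ≤ √W := by
      rw [show γ / 2 * s = γ * s / 2 by ring, exp_half, ← sqrt_mul (exp_pos _).le]
      exact sqrt_le_sqrt (hmax hs)
    have hexp : exp (γ * s) = exp (γ / 2 * s) * exp (γ / 2 * s) := by
      rw [← exp_add]; ring_nf
    calc exp (γ * s) * (y' s + γ * y s) ≤ exp (γ * s) * (f s * √(y s) + g s) := by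
          exact mul_le_mul_of_nonneg_left (hineq s hs.1) (exp_pos _).le
      _ = exp (γ / 2 * s) * √(y s) * (exp (γ / 2 * s) * f s) + exp (γ * s) * g s := by
          rw [mul_add, hexp]; ring
      _ ≤ √W * (exp (γ / 2 * s) * f s) + exp (γ * s) * g s := by
          gcongr
          exact mul_nonneg (exp_pos _).le (hf s hs.1)
  have hfI := hfloc.intervalIntegrable_continuous_mul_of_Ici
    (c := fun s => exp (γ / 2 * s)) (by fun_prop) le_rfl hs₀
  have hgI := hgloc.intervalIntegrable_continuous_mul_of_Ici
    (c := fun s => exp (γ * s)) (by fun_prop) le_rfl hs₀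
  have hFTC := intervalIntegral.sub_le_integral_of_hasDeriv_right_of_le hs₀
    (fun s hs => (hw s hs.1).continuousAt.continuousWithinAt)
    (fun s hs => (hw s hs.1.le).hasDerivWithinAt)
    ((intervalIntegrable_iff_integrableOn_Icc_of_le hs₀).1 ((hfI.const_mul √W).add hgI))
    (fun s hs => hbound s (Ioo_subset_Icc_self hs))
  rw [intervalIntegral.integral_add (hfI.const_mul _) hgI,
    intervalIntegral.integral_const_mul] at hFTC
  linarith

theorem exp_mul_le_two_mul_add_of_isMaxOn (hγ : 0 < γ) (hy : ∀ t ∈ Ici τ, 0 ≤ y t)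
    (hf : ∀ t ∈ Ici τ, 0 ≤ f t) (hg : ∀ t ∈ Ici τ, 0 ≤ g t)
    (hfloc : LocallyIntegrableOn f (Ici τ)) (hgloc : LocallyIntegrableOn g (Ici τ))
    (hderiv : ∀ t ∈ Ici τ, HasDerivAt y (y' t) t)
    (hineq : ∀ t ∈ Ici τ, y' t + γ * y t ≤ f t * √(y t) + g t) {A₁ A₂ : ℝ}
    (hf1 : ∀ r ∈ Ici τ, ∫ s in r..r + 1, f s ≤ A₁) (hg1 : ∀ r ∈ Ici τ, ∫ s in r..r + 1, g s ≤ A₂)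
    {s₀ : ℝ} (hs₀ : τ ≤ s₀) (hmax : IsMaxOn (fun s => exp (γ * s) * y s) (Icc τ s₀) s₀) :
    exp (γ * s₀) * y s₀ ≤ 2 * (exp (γ * τ) * y τ)
      + exp (γ * s₀) * ((A₁ / (1 - exp (-(γ / 2)))) ^ 2 + 2 * (A₂ / (1 - exp (-γ)))) := by
  have hW := exp_mul_le_add_sqrt_mul_integral_of_isMaxOn hf hfloc hgloc hderiv hineq hs₀ hmax
  have hf₀ := integral_exp_mul_le (half_pos hγ) hf hfloc hf1 hs₀
  have hg₀ := integral_exp_mul_le hγ hg hgloc hg1 hs₀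
  have hquad := le_two_mul_add_sq_add_two_mul (mul_nonneg (exp_pos _).le (hy s₀ hs₀))
    (hW.trans (add_le_add (add_le_add le_rfl (mul_le_mul_of_nonneg_left hf₀ (sqrt_nonneg _))) hg₀))
  have hexp : exp (γ / 2 * s₀) ^ 2 = exp (γ * s₀) := by rw [sq, ← exp_add]; ring_nf
  rw [mul_pow, hexp] at hquad
  linarith

end WeightedMaximum

theorem gronwall_sqrt_uniform_general (τ γ : ℝ) (hγ : 0 < γ) (y y' f g : ℝ → ℝ) (A₁ A₂ : ℝ)
    (hy : ∀ t ∈ Ici τ, 0 ≤ y t)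
    (hf : ∀ t ∈ Ici τ, 0 ≤ f t) (hg : ∀ t ∈ Ici τ, 0 ≤ g t)
    (hfloc : LocallyIntegrableOn f (Ici τ))
    (hgloc : LocallyIntegrableOn g (Ici τ))
    (hderiv : ∀ t ∈ Ici τ, HasDerivAt y (y' t) t)
    (hineq : ∀ t ∈ Ici τ, y' t + γ * y t ≤ f t * y t ^ ((1 : ℝ) / 2) + g t)
    (hf1 : ∀ r ∈ Ici τ, ∫ s in r..(r + 1), f s ≤ A₁)
    (hg1 : ∀ r ∈ Ici τ, ∫ s in r..(r + 1), g s ≤ A₂) :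
    ∀ t ∈ Ici τ,
      y t ≤ 2 * y τ * exp (-γ * (t - τ))
        + ((exp (γ / 2) / (1 - exp (-(γ / 2)))) * A₁) ^ 2
        + (2 * exp γ / (1 - exp (-γ))) * A₂ := by
  intro T hT
  have hA₁ := nonneg_of_integral_unit_le hf hf1
  have hA₂ := nonneg_of_integral_unit_le hg hg1
  set K := (A₁ / (1 - exp (-(γ / 2)))) ^ 2 + 2 * (A₂ / (1 - exp (-γ)))
  have hK : 0 ≤ K := by
    have := one_sub_exp_neg_pos hγ
    positivity
  obtain ⟨s₀, hs₀, hmax⟩ := isCompact_Icc.exists_isMaxOn (nonempty_Icc.2 hT)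
    (ContinuousOn.mul (f := fun s => exp (γ * s)) (by fun_prop)
      fun s hs => (hderiv s hs.1).continuousAt.continuousWithinAt)
  have hs₀max : _ ≤ _ + exp (γ * s₀) * K := exp_mul_le_two_mul_add_of_isMaxOn hγ hy hf hg hfloc
    hgloc hderiv (fun t ht => by simpa only [sqrt_eq_rpow] using hineq t ht) hf1 hg1 hs₀.1
    (hmax.on_subset (Icc_subset_Icc_right hs₀.2))
  have hyT : y T ≤ 2 * y τ * exp (-γ * (T - τ)) + K := by
    refine le_of_mul_le_mul_left ?_ (exp_pos (γ * T))
    calc exp (γ * T) * y T ≤ exp (γ * s₀) * y s₀ := hmax ⟨hT, le_rfl⟩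
      _ ≤ 2 * (exp (γ * τ) * y τ) + exp (γ * T) * K := by
          have : exp (γ * s₀) ≤ exp (γ * T) := by gcongr; exact hs₀.2
          linarith [mul_le_mul_of_nonneg_right this hK]
      _ = exp (γ * T) * (2 * y τ * exp (-γ * (T - τ)) + K) := by
          have : exp (γ * T) * exp (-γ * (T - τ)) = exp (γ * τ) := by rw [← exp_add]; ring_nf
          rw [← this]; ring
  have hC₁ := pow_le_pow_left₀ (div_nonneg hA₁ (one_sub_exp_neg_pos (half_pos hγ)).le)
    (div_one_sub_exp_neg_le (half_pos hγ) hA₁) 2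
  have hC₂ := div_one_sub_exp_neg_le hγ hA₂
  linarith [show 2 * exp γ / (1 - exp (-γ)) * A₂ = 2 * (exp γ / (1 - exp (-γ)) * A₂) by ring]

/-- Uniform (dissipative) Gronwall-type inequality: if `y' + γ y ≤ f √y + g` with `y, f, g ≥ 0`
and `f, g` translation bounded with bounds `A₁, A₂ > 0`, then
`y t ≤ 2 y(τ) e^{-γ(t-τ)} + Q(γ, A₁, A₂)`, where
`Q(γ, A₁, A₂) = ((e^{γ/2}/(1 - e^{-γ/2})) A₁)² + (2 e^γ/(1 - e^{-γ})) A₂`. -/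
theorem gronwall_sqrt_uniform (τ γ : ℝ) (hγ : 0 < γ) (y y' f g : ℝ → ℝ) (A₁ A₂ : ℝ)
    (hA₁ : 0 < A₁) (hA₂ : 0 < A₂)
    (hy : ∀ t ∈ Ici τ, 0 ≤ y t)
    (hf : ∀ t ∈ Ici τ, 0 ≤ f t) (hg : ∀ t ∈ Ici τ, 0 ≤ g t)
    (hfloc : LocallyIntegrableOn f (Ici τ))
    (hgloc : LocallyIntegrableOn g (Ici τ))
    (hderiv : ∀ t ∈ Ici τ, HasDerivAt y (y' t) t)
    (hineq : ∀ t ∈ Ici τ, y' t + γ * y t ≤ f t * y t ^ ((1 : ℝ) / 2) + g t)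
    (hf1 : ∀ r ∈ Ici τ, ∫ s in r..(r + 1), f s ≤ A₁)
    (hg1 : ∀ r ∈ Ici τ, ∫ s in r..(r + 1), g s ≤ A₂) :
    ∀ t ∈ Ici τ,
      y t ≤ 2 * y τ * exp (-γ * (t - τ))
        + ((exp (γ / 2) / (1 - exp (-(γ / 2)))) * A₁) ^ 2
        + (2 * exp γ / (1 - exp (-γ))) * A₂ :=
  gronwall_sqrt_uniform_general τ γ hγ y y' f g A₁ A₂ hy hf hg hfloc hgloc hderiv hineq hf1 hg1
end

section
/- Let τ ∈ ℝ, γ > 0, and n ∈ ℕ, and set ω = aₙ := (n+1)/(n+2). Let y, f, g : [τ, ∞) → ℝ be nonnegative functions with f, g locally integrable, and assume y is differentiable on [τ, ∞), y(t) ≥ 1 for all t ≥ τ, and y′(t) + γ·y(t) ≤ f(t)·y(t)^{ω} + g(t) for every t ∈ [τ, ∞). Assume sup_{t ≥ τ} ∫_t^{t+1} f(s) ds ≤ A₁ and sup_{t ≥ τ} ∫_t^{t+1} g(s) ds ≤ A₂ for positive constants A₁, A₂. Then for every t ≥ τ: y(t) ≤ 4·(4^{αₙ}·2^{βₙ}·y(τ)·e^{−θₙ·γ·(t−τ)}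 + Q(γ/2, A₁, A₂)^{βₙ}), where α₀ = 0 and αₙ = (n+2)·∑_{j=2}^{n+1} 1/j for n ≥ 1, βₙ = (n+2)/2, θₙ = (n+2)/2^{n+1}, and Q(γ, A₁, A₂) = ((e^{γ/2}/(1 − e^{−γ/2}))·A₁)² + (2·e^{γ}/(1 − e^{−γ}))·A₂. -/
/-
For `ω = 1/2`, let `m` be the maximum of `e^{γ s} y(s)` on `[τ, t]`, attained at `c`. Integrating
the inequality against `e^{γ s}` up to `c`, using `y(s) ≤ m e^{-γ s}` under the square root and
bounding the exponentially weighted integrals of `f` and `g` window by window (a geometric series),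
gives `m ≤ e^{γ τ} y(τ) + √m K₁ e^{γ c / 2} + K₂ e^{γ c}`: a quadratic inequality in `√m`.
For `ω = (n+2)/(n+3)`, the function `z = y^ω` satisfies an inequality of the same kind with exponent
`(n+1)/(n+2)` and with `γ, f, g` scaled by `ω ≤ 1`, which only improves the constants; raising the
bound on `z` to the power `1/ω` by the power-mean inequality gives the bound on `y`.
-/

open MeasureTheory Set Real

theorem Real.rpow_add_le_mul_rpow_add_rpow {a b p : ℝ} (ha : 0 ≤ a) (hb : 0 ≤ b) (hp : 1 ≤ p) :
    (a + b) ^ p ≤ 2 ^ (p - 1) * (a ^ p + b ^ p) := by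
  lift a to NNReal using ha
  lift b to NNReal using hb
  exact_mod_cast NNReal.rpow_add_le_mul_rpow_add_rpow a b hp

theorem two_mul_rpow_le_of_two_mul_le {x a b p : ℝ} (hx : 0 ≤ x) (ha : 0 ≤ a) (hb : 0 ≤ b)
    (hp : 1 ≤ p) (h : 2 * x ≤ a + b) : 2 * x ^ p ≤ a ^ p + b ^ p := by
  have h2p : (2 : ℝ) ^ p = 2 * 2 ^ (p - 1) := by
    rw [rpow_sub two_pos, rpow_one]; ring
  have := (rpow_le_rpow (by positivity) h (by linarith)).trans
    (Real.rpow_add_le_mul_rpow_add_rpow ha hb hp)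
  rw [mul_rpow zero_le_two hx, h2p] at this
  exact le_of_mul_le_mul_left (by linarith) (by positivity : (0 : ℝ) < 2 ^ (p - 1))

theorem le_of_le_add_sqrt_mul {m a b c : ℝ} (hm : 0 ≤ m) (h : m ≤ a + √m * b + c) :
    m ≤ 2 * a + b ^ 2 + 2 * c := by
  nlinarith [sq_nonneg (√m - b), sq_sqrt hm]

theorem one_sub_exp_neg_pos_s3 {σ : ℝ} (hσ : 0 < σ) : 0 < 1 - exp (-σ) :=
  sub_pos.2 (exp_lt_one_iff.2 (neg_lt_zero.2 hσ))

theorem mul_inv_one_sub_exp_neg_mul_le {σ c : ℝ} (hσ : 0 < σ) (hc₀ : 0 < c) (hc₁ : c ≤ 1) :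
    c * (1 - exp (-(c * σ)))⁻¹ ≤ (1 - exp (-σ))⁻¹ := by
  have hconv : exp (-(c * σ)) ≤ (1 - c) + c * exp (-σ) := by
    have := convexOn_exp.2 (mem_univ 0) (mem_univ (-σ)) (sub_nonneg.2 hc₁) hc₀.le (by ring)
    simpa [smul_eq_mul] using this
  rw [← div_eq_mul_inv, div_le_iff₀ (one_sub_exp_neg_pos_s3 (mul_pos hc₀ hσ)),
    inv_mul_eq_div, le_div_iff₀ (one_sub_exp_neg_pos_s3 hσ)]
  linarith

theorem two_mul_inv_one_sub_exp_neg_two_mul_le {σ : ℝ} (hσ : 0 < σ) :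
    2 * (1 - exp (-(2 * σ)))⁻¹ ≤ exp σ / (1 - exp (-σ)) := by
  have hu₀ := exp_pos (-σ)
  have hu₁ := one_sub_exp_neg_pos_s3 hσ
  have hsq : exp (-(2 * σ)) = exp (-σ) ^ 2 := by rw [← exp_nat_mul]; ring_nf
  have hinv : exp σ = (exp (-σ))⁻¹ := by rw [exp_neg, inv_inv]
  rw [hsq, hinv, ← sub_nonneg]
  have hu₂ : 1 - exp (-σ) ^ 2 ≠ 0 := by nlinarith
  have : (exp (-σ))⁻¹ / (1 - exp (-σ)) - 2 * (1 - exp (-σ) ^ 2)⁻¹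
      = (exp (-σ) * (1 + exp (-σ)))⁻¹ := by
    field_simp
    ring
  rw [this]
  positivity

structure TranslationBounded (τ A : ℝ) (F : ℝ → ℝ) : Prop where
  nonneg : ∀ t ∈ Ici τ, 0 ≤ F t
  locallyIntegrableOn : LocallyIntegrableOn F (Ici τ)
  integral_le : ∀ r ∈ Ici τ, ∫ s in r..(r + 1), F s ≤ A

namespace TranslationBounded

variable {τ A : ℝ} {F : ℝ → ℝ}

theorem intervalIntegrable (hF : TranslationBounded τ A F) {a b : ℝ} (ha : τ ≤ a) (hb : τ ≤ b) :
    IntervalIntegrable F volume a b :=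
  (hF.locallyIntegrableOn.integrableOn_compact_subset
    (fun _ hx => le_trans (le_min ha hb) hx.1) isCompact_uIcc).intervalIntegrable

theorem intervalIntegrable_mul (hF : TranslationBounded τ A F) {G : ℝ → ℝ} {a b : ℝ}
    (ha : τ ≤ a) (hb : τ ≤ b) (hG : ContinuousOn G (uIcc a b)) :
    IntervalIntegrable (fun s => G s * F s) volume a b :=
  (hF.intervalIntegrable ha hb).continuousOn_mul hG

theorem integral_le_of_le_add_one (hF : TranslationBounded τ A F) {a b : ℝ} (ha : τ ≤ a)
    (hab : a ≤ b) (hb : b ≤ a + 1) : ∫ s in a..b, F s ≤ A := by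
  have hsplit := intervalIntegral.integral_add_adjacent_intervals
    (hF.intervalIntegrable ha (ha.trans hab))
    (hF.intervalIntegrable (b := a + 1) (ha.trans hab) (by linarith))
  have hrest : 0 ≤ ∫ s in b..(a + 1), F s :=
    intervalIntegral.integral_nonneg hb fun s hs => hF.nonneg s (ha.trans (hab.trans hs.1))
  linarith [hF.integral_le a ha]

theorem bound_nonneg (hF : TranslationBounded τ A F) : 0 ≤ A :=
  (intervalIntegral.integral_nonneg (by linarith) fun s hs => hF.nonneg s hs.1).trans
    (hF.integral_le τ self_mem_Ici)

theorem const_mul (hF : TranslationBounded τ A F) {c : ℝ} (hc : 0 ≤ c) :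
    TranslationBounded τ (c * A) (fun s => c * F s) where
  nonneg t ht := mul_nonneg hc (hF.nonneg t ht)
  locallyIntegrableOn x hx := by
    obtain ⟨U, hU, hint⟩ := hF.locallyIntegrableOn x hx
    exact ⟨U, hU, hint.const_mul c⟩
  integral_le r hr := by
    rw [intervalIntegral.integral_const_mul]
    exact mul_le_mul_of_nonneg_left (hF.integral_le r hr) hc

/-- The window `[t - k - 1, t - k]` contributes at most `e^{σ (t - k)} A`; these form a geometric
series. -/
theorem integral_exp_mul_le (hF : TranslationBounded τ A F) {σ t : ℝ} (hσ : 0 < σ) (ht : τ ≤ t) :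
    ∫ s in τ..t, exp (σ * s) * F s ≤ exp (σ * t) * ((1 - exp (-σ))⁻¹ * A) := by
  set B := (1 - exp (-σ))⁻¹ * A
  have hq := one_sub_exp_neg_pos_s3 hσ
  have hAB : A ≤ B := by
    rw [le_inv_mul_iff₀ hq]; nlinarith [exp_pos (-σ), hF.bound_nonneg]
  have hB : exp (-σ) * B + A = B := by simp only [B]; field_simp; ring
  have window : ∀ a b, τ ≤ a → a ≤ b → b ≤ a + 1 →
      ∫ s in a..b, exp (σ * s) * F s ≤ exp (σ * b) * A := by
    intro a b ha hab hb
    calc ∫ s in a..b, exp (σ * s) * F s ≤ ∫ s in a..b, exp (σ * b) * F s := by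
          refine intervalIntegral.integral_mono_on hab
            (hF.intervalIntegrable_mul ha (ha.trans hab) (by fun_prop))
            (hF.intervalIntegrable_mul ha (ha.trans hab) (by fun_prop)) fun s hs => ?_
          gcongr
          · exact hF.nonneg s (ha.trans hs.1)
          · exact hs.2
      _ ≤ exp (σ * b) * A := by
          rw [intervalIntegral.integral_const_mul]
          exact mul_le_mul_of_nonneg_left (hF.integral_le_of_le_add_one ha hab hb) (exp_pos _).le
  have hN : ∀ N : ℕ, ∀ t, τ ≤ t → t ≤ τ + N + 1 →
      ∫ s in τ..t, exp (σ * s) * F s ≤ exp (σ * t) * B := by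
    intro N
    induction N with
    | zero =>
      intro t ht htN
      exact (window τ t le_rfl ht (by simpa using htN)).trans
        (mul_le_mul_of_nonneg_left hAB (exp_pos _).le)
    | succ N ih =>
      intro t ht htN
      rcases le_or_gt t (τ + N + 1) with hle | hlt
      · exact ih t ht hle
      have hτ : τ ≤ t - 1 := by linarith
      rw [← intervalIntegral.integral_add_adjacent_intervals
        (hF.intervalIntegrable_mul le_rfl hτ (by fun_prop))
        (hF.intervalIntegrable_mul hτ (by linarith) (by fun_prop))]
      have hprev := ih (t - 1) hτ (by push_cast at htN; linarith)
      have hlast := window (t - 1) t hτ (by linarith) (by linarith)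
      have hexp : exp (σ * (t - 1)) = exp (σ * t) * exp (-σ) := by
        rw [← exp_add]; ring_nf
      calc _ ≤ exp (σ * (t - 1)) * B + exp (σ * t) * A := add_le_add hprev hlast
        _ = exp (σ * t) * (exp (-σ) * B + A) := by rw [hexp]; ring
        _ = exp (σ * t) * B := by rw [hB]
  obtain ⟨N, hN'⟩ := exists_nat_ge (t - τ)
  exact hN N t ht (by linarith)

end TranslationBounded

/-- `K₁² + 2 K₂`, where `K₁ = (1 - e^{-γ/2})⁻¹ A₁` and `K₂ = (1 - e^{-γ})⁻¹ A₂` are the bounds of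
`TranslationBounded.integral_exp_mul_le` for `f` at rate `γ/2` and for `g` at rate `γ`. -/
noncomputable def forcingConst (γ A₁ A₂ : ℝ) : ℝ :=
  ((1 - exp (-(γ / 2)))⁻¹ * A₁) ^ 2 + 2 * (1 - exp (-γ))⁻¹ * A₂

theorem forcingConst_nonneg {γ A₁ A₂ : ℝ} (hγ : 0 < γ) (hA₂ : 0 ≤ A₂) :
    0 ≤ forcingConst γ A₁ A₂ := by
  have := one_sub_exp_neg_pos_s3 hγ
  unfold forcingConst; positivity

theorem forcingConst_mul_le {γ c A₁ A₂ : ℝ} (hγ : 0 < γ) (hc₀ : 0 < c) (hc₁ : c ≤ 1)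
    (hA₁ : 0 ≤ A₁) (hA₂ : 0 ≤ A₂) :
    forcingConst (c * γ) (c * A₁) (c * A₂) ≤ forcingConst γ A₁ A₂ := by
  have h₁ := mul_inv_one_sub_exp_neg_mul_le (half_pos hγ) hc₀ hc₁
  have h₂ := mul_inv_one_sub_exp_neg_mul_le hγ hc₀ hc₁
  rw [show c * (γ / 2) = c * γ / 2 by ring] at h₁
  unfold forcingConst
  gcongr ?_ ^ 2 + ?_
  · have := one_sub_exp_neg_pos_s3 (half_pos (mul_pos hc₀ hγ)); positivity
  · calc _ = c * (1 - exp (-(c * γ / 2)))⁻¹ * A₁ := by ring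
      _ ≤ _ := by gcongr
  · calc _ = 2 * (c * (1 - exp (-(c * γ)))⁻¹) * A₂ := by ring
      _ ≤ _ := by gcongr

theorem two_mul_forcingConst_le {γ A₁ A₂ : ℝ} (hγ : 0 < γ) (hA₁ : 0 ≤ A₁) (hA₂ : 0 ≤ A₂) :
    2 * forcingConst γ A₁ A₂ ≤
      ((exp ((γ / 2) / 2) / (1 - exp (-((γ / 2) / 2)))) * A₁) ^ 2
        + (2 * exp (γ / 2) / (1 - exp (-(γ / 2)))) * A₂ := by
  have h₁ := two_mul_inv_one_sub_exp_neg_two_mul_le (half_pos (half_pos hγ))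
  have h₂ := two_mul_inv_one_sub_exp_neg_two_mul_le (half_pos hγ)
  rw [show 2 * (γ / 2 / 2) = γ / 2 by ring] at h₁
  rw [show 2 * (γ / 2) = γ by ring] at h₂
  have hK₁ : 2 * ((1 - exp (-(γ / 2)))⁻¹ * A₁)
      ≤ exp (γ / 2 / 2) / (1 - exp (-(γ / 2 / 2))) * A₁ := by
    rw [← mul_assoc]; gcongr
  have := one_sub_exp_neg_pos_s3 (half_pos hγ)
  have hK₁' : 2 * ((1 - exp (-(γ / 2)))⁻¹ * A₁) ^ 2
      ≤ (exp (γ / 2 / 2) / (1 - exp (-(γ / 2 / 2))) * A₁) ^ 2 := by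
    nlinarith [pow_le_pow_left₀ (by positivity) hK₁ 2]
  have hK₂ : 2 * (2 * (1 - exp (-γ))⁻¹ * A₂) ≤ 2 * exp (γ / 2) / (1 - exp (-(γ / 2))) * A₂ :=
    calc _ = 2 * (2 * (1 - exp (-γ))⁻¹) * A₂ := by ring
      _ ≤ 2 * (exp (γ / 2) / (1 - exp (-(γ / 2)))) * A₂ := by gcongr
      _ = _ := by ring
  unfold forcingConst
  linarith

theorem exp_mul_sub_le_integral {y y' φ : ℝ → ℝ} {γ a b : ℝ} (hab : a ≤ b)
    (hy : ∀ t ∈ Icc a b, HasDerivAt y (y' t) t)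
    (hφ : IntervalIntegrable (fun s => exp (γ * s) * φ s) volume a b)
    (h : ∀ t ∈ Ioo a b, y' t + γ * y t ≤ φ t) :
    exp (γ * b) * y b - exp (γ * a) * y a ≤ ∫ s in a..b, exp (γ * s) * φ s := by
  have hderiv : ∀ t ∈ Icc a b,
      HasDerivAt (fun s => exp (γ * s) * y s) (exp (γ * t) * (y' t + γ * y t)) t := by
    intro t ht
    have hexp : HasDerivAt (fun s => exp (γ * s)) (exp (γ * t) * γ) t := by
      simpa using ((hasDerivAt_id t).const_mul γ).exp
    exact (hexp.mul (hy t ht)).congr_deriv (by ring)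
  refine intervalIntegral.sub_le_integral_of_hasDeriv_right_of_le hab
    (fun t ht => (hderiv t ht).continuousAt.continuousWithinAt)
    (fun t ht => (hderiv t (Ioo_subset_Icc_self ht)).hasDerivWithinAt)
    ((intervalIntegrable_iff_integrableOn_Icc_of_le hab).1 hφ) fun t ht => ?_
  exact mul_le_mul_of_nonneg_left (h t ht) (exp_pos _).le

structure IsPowerSubsolution (τ γ ω : ℝ) (y y' f g : ℝ → ℝ) : Prop where
  one_le : ∀ t ∈ Ici τ, 1 ≤ y t
  hasDerivAt : ∀ t ∈ Ici τ, HasDerivAt y (y' t) t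
  le : ∀ t ∈ Ici τ, y' t + γ * y t ≤ f t * y t ^ ω + g t

namespace IsPowerSubsolution

variable {τ γ ω A₁ A₂ : ℝ} {y y' f g : ℝ → ℝ}

theorem continuousOn (h : IsPowerSubsolution τ γ ω y y' f g) : ContinuousOn y (Ici τ) :=
  fun t ht => (h.hasDerivAt t ht).continuousAt.continuousWithinAt

theorem le_of_half (h : IsPowerSubsolution τ γ (1 / 2) y y' f g) (hγ : 0 < γ)
    (hf : TranslationBounded τ A₁ f) (hg : TranslationBounded τ A₂ g) {t : ℝ} (ht : τ ≤ t) :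
    y t ≤ 2 * y τ * exp (-(γ * (t - τ))) + forcingConst γ A₁ A₂ := by
  obtain ⟨c, hc, hmax⟩ := isCompact_Icc.exists_isMaxOn (nonempty_Icc.2 ht)
    ((continuous_exp.comp (continuous_const_mul γ)).continuousOn.mul
      (h.continuousOn.mono Icc_subset_Ici_self))
  set m := exp (γ * c) * y c
  have hm : ∀ s ∈ Icc τ c, exp (γ * s) * y s ≤ m := fun s hs => hmax ⟨hs.1, hs.2.trans hc.2⟩
  have hm₀ : 0 ≤ m := (mul_pos (exp_pos _) (zero_lt_one.trans_le (h.one_le c hc.1))).le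
  have hsqrt : ∀ s ∈ Icc τ c,
      exp (γ * s) * (f s * y s ^ (1 / 2 : ℝ)) ≤ √m * (exp (γ / 2 * s) * f s) := by
    intro s hs
    have hy₀ : 0 ≤ y s := zero_le_one.trans (h.one_le s hs.1)
    have : exp (γ * s) * √(y s) = exp (γ / 2 * s) * √(exp (γ * s) * y s) := by
      rw [sqrt_mul (exp_pos _).le, ← exp_half, ← mul_assoc, ← exp_add]
      ring_nf
    calc _ = exp (γ / 2 * s) * √(exp (γ * s) * y s) * f s := by
          rw [← sqrt_eq_rpow, ← this]; ring
      _ ≤ exp (γ / 2 * s) * √m * f s := by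
          gcongr
          · exact hf.nonneg s hs.1
          · exact hm s hs
      _ = _ := by ring
  have hint₁ :
      IntervalIntegrable (fun s => exp (γ * s) * (f s * y s ^ (1 / 2 : ℝ))) volume τ c := by
    have := hf.intervalIntegrable_mul le_rfl hc.1 (G := fun s => exp (γ * s) * y s ^ (1 / 2 : ℝ))
      (by
        rw [uIcc_of_le hc.1]
        exact (continuous_exp.comp (continuous_const_mul γ)).continuousOn.mul
          ((h.continuousOn.mono Icc_subset_Ici_self).rpow_const fun _ _ => Or.inr (by norm_num)))
    simpa only [mul_comm, mul_left_comm, mul_assoc] using this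
  have hint₂ : IntervalIntegrable (fun s => exp (γ * s) * g s) volume τ c :=
    hg.intervalIntegrable_mul le_rfl hc.1 (by fun_prop)
  have hIf : ∫ s in τ..c, exp (γ * s) * (f s * y s ^ (1 / 2 : ℝ))
      ≤ √m * (exp (γ / 2 * c) * ((1 - exp (-(γ / 2)))⁻¹ * A₁)) := by
    calc _ ≤ ∫ s in τ..c, √m * (exp (γ / 2 * s) * f s) :=
          intervalIntegral.integral_mono_on hc.1 hint₁
            ((hf.intervalIntegrable_mul le_rfl hc.1 (by fun_prop)).const_mul _) hsqrt
      _ ≤ _ := by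
          rw [intervalIntegral.integral_const_mul]
          exact mul_le_mul_of_nonneg_left (hf.integral_exp_mul_le (half_pos hγ) hc.1)
            (sqrt_nonneg m)
  have hIg := hg.integral_exp_mul_le hγ hc.1
  have hI := exp_mul_sub_le_integral hc.1 (fun s hs => h.hasDerivAt s hs.1)
    (by simpa only [mul_add] using hint₁.add hint₂) (fun s hs => h.le s hs.1.le)
  simp only [mul_add] at hI
  rw [intervalIntegral.integral_add hint₁ hint₂] at hI
  have hm_le : m ≤ 2 * (exp (γ * τ) * y τ) + exp (γ * c) * forcingConst γ A₁ A₂ := by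
    have := le_of_le_add_sqrt_mul hm₀
      (a := exp (γ * τ) * y τ) (b := exp (γ / 2 * c) * ((1 - exp (-(γ / 2)))⁻¹ * A₁))
      (c := exp (γ * c) * ((1 - exp (-γ))⁻¹ * A₂)) (by linarith)
    have hsq : exp (γ / 2 * c) ^ 2 = exp (γ * c) := by rw [← exp_nat_mul]; ring_nf
    unfold forcingConst
    linear_combination this + ((1 - exp (-(γ / 2)))⁻¹ * A₁) ^ 2 * hsq
  have hQ := forcingConst_nonneg (A₁ := A₁) hγ hg.bound_nonneg
  have hdecay : exp (γ * τ) = exp (γ * t) * exp (-(γ * (t - τ))) := by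
    rw [← exp_add]; ring_nf
  have hyt : exp (γ * t) * y t ≤ 2 * (exp (γ * τ) * y τ) + exp (γ * t) * forcingConst γ A₁ A₂ :=
    calc _ ≤ m := hmax (right_mem_Icc.2 ht)
      _ ≤ _ := hm_le
      _ ≤ _ := by gcongr; exact hc.2
  rw [hdecay] at hyt
  exact le_of_mul_le_mul_left (hyt.trans_eq (by ring)) (exp_pos (γ * t))

theorem rpow (h : IsPowerSubsolution τ γ ω y y' f g) (hω₀ : 0 < ω) (hω₁ : ω ≤ 1)
    (hg : ∀ t ∈ Ici τ, 0 ≤ g t) :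
    IsPowerSubsolution τ (ω * γ) (2 - ω⁻¹) (fun t => y t ^ ω)
      (fun t => ω * y t ^ (ω - 1) * y' t) (fun t => ω * f t) (fun t => ω * g t) where
  one_le t ht := one_le_rpow (h.one_le t ht) hω₀.le
  hasDerivAt t ht :=
    ((h.hasDerivAt t ht).rpow_const (Or.inl (zero_lt_one.trans_le (h.one_le t ht)).ne')).congr_deriv
      (by ring)
  le t ht := by
    have hy₁ := h.one_le t ht
    have hy₀ : 0 < y t := zero_lt_one.trans_le hy₁
    have hw : 0 ≤ ω * y t ^ (ω - 1) := by positivity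
    have hlin : y t ^ (ω - 1) * y t = y t ^ ω := by
      rw [rpow_sub_one hy₀.ne', div_mul_cancel₀ _ hy₀.ne']
    have hpow : y t ^ (ω - 1) * y t ^ ω = (y t ^ ω) ^ (2 - ω⁻¹) := by
      rw [← rpow_add hy₀, ← rpow_mul hy₀.le]
      congr 1
      field_simp
      ring
    have hg' : g t * y t ^ (ω - 1) ≤ g t :=
      mul_le_of_le_one_right (hg t ht) (rpow_le_one_of_one_le_of_nonpos hy₁ (by linarith))
    have := mul_le_mul_of_nonneg_left (h.le t ht) hw
    calc _ = ω * y t ^ (ω - 1) * (y' t + γ * y t) := by rw [← hlin]; ring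
      _ ≤ ω * y t ^ (ω - 1) * (f t * y t ^ ω + g t) := this
      _ = ω * f t * (y t ^ (ω - 1) * y t ^ ω) + ω * (g t * y t ^ (ω - 1)) := by ring
      _ ≤ _ := by rw [hpow]; gcongr

/-- Stated for `2 y` because `two_mul_rpow_le_of_two_mul_le` carries a bound of this shape through
the substitution `z = y^ω`. -/
theorem two_mul_le (n : ℕ) (h : IsPowerSubsolution τ γ ((n + 1) / (n + 2)) y y' f g)
    (hγ : 0 < γ) (hf : TranslationBounded τ A₁ f) (hg : TranslationBounded τ A₂ g) {t : ℝ}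
    (ht : τ ≤ t) :
    2 * y t ≤ 2 ^ (n + 2) * y τ * exp (-(γ * (t - τ)))
      + (2 * forcingConst γ A₁ A₂) ^ (((n : ℝ) + 2) / 2) := by
  induction n generalizing γ y y' f g A₁ A₂ with
  | zero =>
    have := (show IsPowerSubsolution τ γ (1 / 2) y y' f g by simpa using h).le_of_half hγ hf hg ht
    norm_num
    linarith
  | succ n ih =>
    set ω : ℝ := (n + 2) / (n + 3)
    have hω₀ : 0 < ω := by positivity
    have hω₁ : ω ≤ 1 := (div_le_one (by positivity)).2 (by linarith)
    have hz := ((show IsPowerSubsolution τ γ ω y y' f g by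
        convert h using 2 <;> push_cast <;> ring).rpow hω₀ hω₁ hg.nonneg)
    rw [show 2 - ω⁻¹ = ((n : ℝ) + 1) / (n + 2) by simp only [ω]; field_simp; ring] at hz
    have hzt := ih hz (mul_pos hω₀ hγ) (hf.const_mul hω₀.le) (hg.const_mul hω₀.le)
    have hQ₀ := forcingConst_nonneg (A₁ := A₁) hγ hg.bound_nonneg
    have hQ : 2 * forcingConst (ω * γ) (ω * A₁) (ω * A₂) ≤ 2 * forcingConst γ A₁ A₂ := by
      gcongr; exact forcingConst_mul_le hγ hω₀ hω₁ hf.bound_nonneg hg.bound_nonneg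
    have hzt' : 2 * y t ^ ω ≤ 2 ^ (n + 2) * y τ ^ ω * exp (-(ω * γ * (t - τ)))
        + (2 * forcingConst γ A₁ A₂) ^ (((n : ℝ) + 2) / 2) :=
      hzt.trans <| by
        have := forcingConst_nonneg (A₁ := ω * A₁) (mul_pos hω₀ hγ)
          (mul_nonneg hω₀.le hg.bound_nonneg)
        gcongr
    have hy₀ : ∀ s ∈ Ici τ, 0 ≤ y s := fun s hs => zero_le_one.trans (h.one_le s hs)
    have hp : ((n : ℝ) + 2) * ω⁻¹ = n + 3 := by simp only [ω]; field_simp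
    have key := two_mul_rpow_le_of_two_mul_le (p := ω⁻¹) (rpow_nonneg (hy₀ t ht) _)
      (by have := hy₀ τ self_mem_Ici; positivity) (by positivity) (one_le_inv₀ hω₀ |>.2 hω₁) hzt'
    rw [rpow_rpow_inv (hy₀ t ht) hω₀.ne', mul_rpow (by have := hy₀ τ self_mem_Ici; positivity)
      (exp_pos _).le, mul_rpow (by positivity) (rpow_nonneg (hy₀ τ self_mem_Ici) _),
      rpow_rpow_inv (hy₀ τ self_mem_Ici) hω₀.ne', ← rpow_natCast_mul zero_le_two, ← exp_mul,
      ← rpow_mul (by positivity)] at key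
    convert key using 3
    · push_cast; rw [hp, ← rpow_natCast]; push_cast; ring_nf
    · congr 1; simp only [ω]; field_simp
    · simp only [ω]; push_cast; field_simp; ring

end IsPowerSubsolution

theorem two_pow_succ_le (n : ℕ) :
    (2 : ℝ) ^ (n + 1) ≤
      4 * (4 : ℝ) ^ (((n : ℝ) + 2) * ∑ j ∈ Finset.Icc 2 (n + 1), (1 : ℝ) / (j : ℝ))
        * (2 : ℝ) ^ (((n : ℝ) + 2) / 2) := by
  set α := ((n : ℝ) + 2) * ∑ j ∈ Finset.Icc 2 (n + 1), (1 : ℝ) / (j : ℝ)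
  have hα : (n : ℝ) ≤ 2 * α := by
    rcases n with _ | n
    · simp [α]
    have hhalf : (1 : ℝ) / 2 ≤ ∑ j ∈ Finset.Icc 2 (n + 1 + 1), (1 : ℝ) / (j : ℝ) := by
      have := Finset.single_le_sum (f := fun j : ℕ => (1 : ℝ) / j) (fun j _ => by positivity)
        (Finset.mem_Icc.2 ⟨le_rfl, by omega⟩ : 2 ∈ Finset.Icc 2 (n + 1 + 1))
      exact_mod_cast this
    simp only [α]
    push_cast at hhalf ⊢
    nlinarith
  have h4 : (4 : ℝ) = 2 ^ (2 : ℝ) := by norm_num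
  rw [h4, ← rpow_mul zero_le_two, ← rpow_natCast, ← rpow_add two_pos, ← rpow_add two_pos]
  exact rpow_le_rpow_of_exponent_le one_le_two (by push_cast; linarith)

theorem gronwall_power_general (τ γ : ℝ) (hγ : 0 < γ) (n : ℕ) (y y' f g : ℝ → ℝ) (A₁ A₂ : ℝ)
    (hy1 : ∀ t ∈ Ici τ, 1 ≤ y t)
    (hf : ∀ t ∈ Ici τ, 0 ≤ f t) (hg : ∀ t ∈ Ici τ, 0 ≤ g t)
    (hfloc : LocallyIntegrableOn f (Ici τ))
    (hgloc : LocallyIntegrableOn g (Ici τ))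
    (hderiv : ∀ t ∈ Ici τ, HasDerivAt y (y' t) t)
    (hineq : ∀ t ∈ Ici τ,
      y' t + γ * y t ≤ f t * y t ^ (((n : ℝ) + 1) / ((n : ℝ) + 2)) + g t)
    (hf1 : ∀ r ∈ Ici τ, ∫ s in r..(r + 1), f s ≤ A₁)
    (hg1 : ∀ r ∈ Ici τ, ∫ s in r..(r + 1), g s ≤ A₂) :
    ∀ t ∈ Ici τ,
      y t ≤ 4 * ((4 : ℝ) ^ (((n : ℝ) + 2) * ∑ j ∈ Finset.Icc 2 (n + 1), (1 : ℝ) / (j : ℝ))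
          * (2 : ℝ) ^ (((n : ℝ) + 2) / 2) * y τ
          * exp (-(((n : ℝ) + 2) / (2 : ℝ) ^ (n + 1)) * γ * (t - τ))
        + (((exp ((γ / 2) / 2) / (1 - exp (-((γ / 2) / 2)))) * A₁) ^ 2
            + (2 * exp (γ / 2) / (1 - exp (-(γ / 2)))) * A₂) ^ (((n : ℝ) + 2) / 2)) := by
  intro t ht
  have hfw : TranslationBounded τ A₁ f := ⟨hf, hfloc, hf1⟩
  have hgw : TranslationBounded τ A₂ g := ⟨hg, hgloc, hg1⟩
  have hbound := IsPowerSubsolution.two_mul_le n ⟨hy1, hderiv, hineq⟩ hγ hfw hgw ht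
  have hQ := two_mul_forcingConst_le hγ hfw.bound_nonneg hgw.bound_nonneg
  have hθ : ((n : ℝ) + 2) / 2 ^ (n + 1) ≤ 1 :=
    (div_le_one (by positivity)).2 (by exact_mod_cast Nat.lt_two_pow_self (n := n + 1))
  have hdecay : exp (-(γ * (t - τ))) ≤ exp (-(((n : ℝ) + 2) / 2 ^ (n + 1)) * γ * (t - τ)) :=
    exp_le_exp.2 (by nlinarith [mul_nonneg (sub_nonneg.2 hθ) (mul_nonneg hγ.le (sub_nonneg.2 ht))])
  have hyτ := zero_le_one.trans (hy1 τ self_mem_Ici)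
  have hinit : 2 ^ (n + 2) * y τ * exp (-(γ * (t - τ))) ≤ 2 * (4 * (4 : ℝ) ^ (((n : ℝ) + 2)
      * ∑ j ∈ Finset.Icc 2 (n + 1), (1 : ℝ) / (j : ℝ)) * (2 : ℝ) ^ (((n : ℝ) + 2) / 2)) * y τ
      * exp (-(((n : ℝ) + 2) / (2 : ℝ) ^ (n + 1)) * γ * (t - τ)) :=
    calc _ = 2 * 2 ^ (n + 1) * y τ * exp (-(γ * (t - τ))) := by ring
      _ ≤ _ := by gcongr; exact two_pow_succ_le n
  have hQ₀ := forcingConst_nonneg (A₁ := A₁) hγ hgw.bound_nonneg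
  have hforcing := rpow_le_rpow (by positivity) hQ (by positivity : (0 : ℝ) ≤ ((n : ℝ) + 2) / 2)
  have := (rpow_nonneg (by positivity) _).trans hforcing
  linarith

/-- Generalized Gronwall-type inequality for the differential inequality
`y' + γ y ≤ f y^ω + g` with exponent `ω = aₙ = (n+1)/(n+2)`, nonnegative translation-bounded
data `f, g` (with bounds `A₁, A₂ > 0`) and `y ≥ 1`:
`y t ≤ 4 (4^{αₙ} 2^{βₙ} y(τ) e^{-θₙ γ (t-τ)} + Q(γ/2, A₁, A₂)^{βₙ})`, where
`αₙ = (n+2) ∑_{j=2}^{n+1} 1/j` (so `α₀ = 0`), `βₙ = (n+2)/2`, `θₙ = (n+2)/2^{n+1}`,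
and `Q(γ, A₁, A₂) = ((e^{γ/2}/(1 - e^{-γ/2})) A₁)² + (2 e^γ/(1 - e^{-γ})) A₂`. -/
theorem gronwall_power (τ γ : ℝ) (hγ : 0 < γ) (n : ℕ) (y y' f g : ℝ → ℝ) (A₁ A₂ : ℝ)
    (hA₁ : 0 < A₁) (hA₂ : 0 < A₂)
    (hy : ∀ t ∈ Ici τ, 0 ≤ y t)
    (hy1 : ∀ t ∈ Ici τ, 1 ≤ y t)
    (hf : ∀ t ∈ Ici τ, 0 ≤ f t) (hg : ∀ t ∈ Ici τ, 0 ≤ g t)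
    (hfloc : LocallyIntegrableOn f (Ici τ))
    (hgloc : LocallyIntegrableOn g (Ici τ))
    (hderiv : ∀ t ∈ Ici τ, HasDerivAt y (y' t) t)
    (hineq : ∀ t ∈ Ici τ,
      y' t + γ * y t ≤ f t * y t ^ (((n : ℝ) + 1) / ((n : ℝ) + 2)) + g t)
    (hf1 : ∀ r ∈ Ici τ, ∫ s in r..(r + 1), f s ≤ A₁)
    (hg1 : ∀ r ∈ Ici τ, ∫ s in r..(r + 1), g s ≤ A₂) :
    ∀ t ∈ Ici τ,
      y t ≤ 4 * ((4 : ℝ) ^ (((n : ℝ) + 2) * ∑ j ∈ Finset.Icc 2 (n + 1), (1 : ℝ) / (j : ℝ))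
          * (2 : ℝ) ^ (((n : ℝ) + 2) / 2) * y τ
          * exp (-(((n : ℝ) + 2) / (2 : ℝ) ^ (n + 1)) * γ * (t - τ))
        + (((exp ((γ / 2) / 2) / (1 - exp (-((γ / 2) / 2)))) * A₁) ^ 2
            + (2 * exp (γ / 2) / (1 - exp (-(γ / 2)))) * A₂) ^ (((n : ℝ) + 2) / 2)) :=
  gronwall_power_general τ γ hγ n y y' f g A₁ A₂ hy1 hf hg hfloc hgloc hderiv hineq hf1 hg1
end

section
/- Let ζ ∈ (0, 1/2) and τ ∈ ℝ. Let Z : (τ, ∞) → ℝ be a nonnegative measurable function with Z ∈ L²(τ, ∞), and suppose there exist C > 0 and t₀ ≥ τ such that ∫_t^{∞} Z(s)² ds ≤ C·Z(t)^{1/(1−ζ)} for almost every t ≥ t₀. Then Z ∈ L¹(t₀, ∞), i.e. ∫_{t₀}^{∞} Z(t) dt < ∞. -/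
open MeasureTheory Set Real Filter Topology

/-!
Let `φ t = ∫_t^∞ Z²` and `β = 2(1 - ζ) ∈ (1, 2)`. Since `φ` is antitone, the hypothesis gives
`Z² ≥ (φ b / C)^β` on `(a, b]`, hence `(b - a) φ(b)^β ≤ C^β φ(a)`. Along `T k = t₀ + 2^k - 1` this
recursion forces `φ (T k) = O(2^(-k/(β-1)))`, and by Cauchy–Schwarz
`∫_{T k}^{T (k+1)} Z ≤ √(2^k φ(T k))`, which is summable because `1/(β - 1) > 1`.
-/

theorem le_of_rpow_succ_le_mul {y : ℕ → ℝ} {β E K : ℝ} (hβ : 0 < β) (hE : 0 ≤ E)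
    (hy : ∀ k, 0 ≤ y k) (hK : E * K ≤ K ^ β) (h0 : y 0 ≤ K)
    (hrec : ∀ k, y (k + 1) ^ β ≤ E * y k) (k : ℕ) : y k ≤ K := by
  induction k with
  | zero => exact h0
  | succ k ih =>
    refine (rpow_le_rpow_iff (hy _) ((hy 0).trans h0) hβ).1 ?_
    calc y (k + 1) ^ β ≤ E * y k := hrec k
      _ ≤ E * K := mul_le_mul_of_nonneg_left ih hE
      _ ≤ K ^ β := hK

theorem exists_rpow_mul_le_of_rpow_succ_le {x : ℕ → ℝ} {β D : ℝ} (hβ : 1 < β) (hD : 0 ≤ D)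
    (hx : ∀ k, 0 ≤ x k) (hrec : ∀ k, 2 ^ k * x (k + 1) ^ β ≤ D * x k) :
    ∃ K, ∀ k, (2 ^ (β - 1)⁻¹ : ℝ) ^ k * x k ≤ K := by
  set r : ℝ := 2 ^ (β - 1)⁻¹
  have hr : 0 < r := by positivity
  -- `r ^ β = 2 r` lets the weights `r ^ k` absorb the factor `2 ^ k` of the recursion.
  have hrβ : r ^ β = 2 * r := by
    have : (β - 1)⁻¹ * β = 1 + (β - 1)⁻¹ := by field_simp [(by linarith : β - 1 ≠ 0)]; ring
    rw [← rpow_mul zero_le_two, this, rpow_add zero_lt_two, rpow_one]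
  set E := 2 * r * D
  have hE : 0 ≤ E := by positivity
  set K := max (r ^ 0 * x 0) (E ^ (β - 1)⁻¹)
  have hK0 : 0 ≤ K := (le_max_right _ _).trans' (by positivity)
  have hEK : E ≤ K ^ (β - 1) :=
    calc E = (E ^ (β - 1)⁻¹) ^ (β - 1) := by
          rw [← rpow_mul hE, inv_mul_cancel₀ (by linarith), rpow_one]
      _ ≤ K ^ (β - 1) := rpow_le_rpow (by positivity) (le_max_right _ _) (by linarith)
  refine ⟨K, le_of_rpow_succ_le_mul (β := β) (by linarith) hE
    (fun k => mul_nonneg (by positivity) (hx k)) ?_ (le_max_left _ _) fun k => ?_⟩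
  · calc E * K ≤ K ^ (β - 1) * K := mul_le_mul_of_nonneg_right hEK hK0
      _ = K ^ β := by rw [← rpow_add_one' hK0 (by linarith), sub_add_cancel]
  · calc (r ^ (k + 1) * x (k + 1)) ^ β = (2 * r) ^ (k + 1) * x (k + 1) ^ β := by
          rw [mul_rpow (by positivity) (hx _), ← rpow_pow_comm hr.le, hrβ]
      _ = 2 * r * r ^ k * (2 ^ k * x (k + 1) ^ β) := by ring
      _ ≤ 2 * r * r ^ k * (D * x k) :=
          mul_le_mul_of_nonneg_left (hrec k) (by positivity)
      _ = E * (r ^ k * x k) := by ring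

theorem summable_sqrt_two_pow_mul_of_rpow_succ_le {x : ℕ → ℝ} {β D : ℝ} (hβ₁ : 1 < β)
    (hβ₂ : β < 2) (hD : 0 ≤ D) (hx : ∀ k, 0 ≤ x k)
    (hrec : ∀ k, 2 ^ k * x (k + 1) ^ β ≤ D * x k) :
    Summable fun k => √(2 ^ k * x k) := by
  obtain ⟨K, hK⟩ := exists_rpow_mul_le_of_rpow_succ_le hβ₁ hD hx hrec
  set r : ℝ := 2 ^ (β - 1)⁻¹
  have hr : 2 < r := by
    conv_lhs => rw [← rpow_one 2]
    exact rpow_lt_rpow_of_exponent_lt one_lt_two ((one_lt_inv₀ (by linarith)).2 (by linarith))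
  have hK0 : 0 ≤ K := (mul_nonneg (by positivity) (hx 0)).trans (hK 0)
  have hρ : √(2 / r) < 1 := by
    rw [sqrt_lt' one_pos, one_pow, div_lt_one (by linarith)]
    exact hr
  refine Summable.of_nonneg_of_le (fun k => sqrt_nonneg _) (fun k => ?_)
    ((summable_geometric_of_lt_one (sqrt_nonneg _) hρ).mul_left √K)
  rw [sqrt_le_left (by positivity)]
  calc 2 ^ k * x k = (2 / r) ^ k * (r ^ k * x k) := by
        rw [div_pow]; field_simp
    _ ≤ (2 / r) ^ k * K := mul_le_mul_of_nonneg_left (hK k) (by positivity)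
    _ = (√K * √(2 / r) ^ k) ^ 2 := by
        rw [mul_pow, sq_sqrt hK0, ← pow_mul, mul_comm k, pow_mul, sq_sqrt (by positivity)]
        ring

section SquareIntegrable

variable {X : Type*} [MeasurableSpace X] {μ : Measure X} {s : Set X} {f : X → ℝ}

theorem integrableOn_of_integrableOn_sq (hs : μ s ≠ ⊤) (hf : AEStronglyMeasurable f (μ.restrict s))
    (hf2 : IntegrableOn (fun x => f x ^ 2) s μ) : IntegrableOn f s μ := by
  have : IsFiniteMeasure (μ.restrict s) := ⟨by simpa using hs.lt_top⟩
  exact ((memLp_two_iff_integrable_sq hf).2 hf2).integrable one_le_two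

theorem setIntegral_norm_le_sqrt_measureReal_mul (hs : μ s ≠ ⊤)
    (hf : AEStronglyMeasurable f (μ.restrict s)) (hf2 : IntegrableOn (fun x => f x ^ 2) s μ) :
    ∫ x in s, ‖f x‖ ∂μ ≤ √(μ.real s * ∫ x in s, f x ^ 2 ∂μ) := by
  have : IsFiniteMeasure (μ.restrict s) := ⟨by simpa using hs.lt_top⟩
  have hf2' : MemLp (fun x => ‖f x‖) (ENNReal.ofReal 2) (μ.restrict s) := by
    simpa using ((memLp_two_iff_integrable_sq hf).2 hf2).norm
  have h := integral_mul_le_Lp_mul_Lq_of_nonneg Real.HolderConjugate.two_two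
    (ae_of_all _ fun _ => zero_le_one) (ae_of_all _ fun x => norm_nonneg (f x))
    (memLp_const 1) hf2'
  rw [sqrt_eq_rpow, mul_rpow measureReal_nonneg (setIntegral_nonneg_of_ae_restrict
    (ae_of_all _ fun x => sq_nonneg (f x)))]
  simpa [rpow_two] using h

end SquareIntegrable

theorem setIntegral_Ioc_norm_le_sqrt {f : ℝ → ℝ} {a b : ℝ} (hab : a ≤ b)
    (hf : AEStronglyMeasurable f (volume.restrict (Ioc a b)))
    (hf2 : IntegrableOn (fun x => f x ^ 2) (Ioi a)) :
    ∫ x in Ioc a b, ‖f x‖ ≤ √((b - a) * ∫ x in Ioi a, f x ^ 2) := by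
  refine (setIntegral_norm_le_sqrt_measureReal_mul measure_Ioc_lt_top.ne hf
    (hf2.mono_set Ioc_subset_Ioi_self)).trans (sqrt_le_sqrt ?_)
  rw [volume_real_Ioc_of_le hab]
  exact mul_le_mul_of_nonneg_left (setIntegral_mono_set hf2
    (ae_of_all _ fun x => sq_nonneg (f x)) Ioc_subset_Ioi_self.eventuallyLE) (sub_nonneg.2 hab)

theorem integrableOn_Ioi_of_summable_integral_norm_Ioc {E : Type*} [NormedAddCommGroup E]
    {μ : Measure ℝ} {f : ℝ → E} {T : ℕ → ℝ} (hT : Monotone T) (hT_top : Tendsto T atTop atTop)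
    (hf : ∀ k, IntegrableOn f (Ioc (T k) (T (k + 1))) μ)
    (hsum : Summable fun k => ∫ x in Ioc (T k) (T (k + 1)), ‖f x‖ ∂μ) :
    IntegrableOn f (Ioi (T 0)) μ := by
  have hint (k : ℕ) : IntervalIntegrable f μ (T k) (T (k + 1)) :=
    (intervalIntegrable_iff_integrableOn_Ioc_of_le (hT k.le_succ)).2 (hf k)
  refine integrableOn_Ioi_of_intervalIntegral_norm_bounded
    (∑' k, ∫ x in Ioc (T k) (T (k + 1)), ‖f x‖ ∂μ) _ (fun n => ?_) hT_top
    (Eventually.of_forall fun n => ?_)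
  · exact (intervalIntegrable_iff_integrableOn_Ioc_of_le (hT n.zero_le)).1
      (IntervalIntegrable.trans_iterate fun k _ => hint k)
  · rw [← intervalIntegral.sum_integral_adjacent_intervals fun k _ => (hint k).norm]
    refine le_of_eq_of_le (Finset.sum_congr rfl fun k _ => ?_)
      (hsum.sum_le_tsum (Finset.range n) fun k _ => integral_nonneg fun x => norm_nonneg (f x))
    exact intervalIntegral.integral_of_le (hT k.le_succ)

theorem rpow_two_mul_le_of_le_mul_rpow_one_div {x z C p : ℝ} (hx : 0 ≤ x) (hz : 0 ≤ z)
    (hC : 0 ≤ C) (hp : 0 < p) (h : x ≤ C * z ^ (1 / p)) : x ^ (2 * p) ≤ C ^ (2 * p) * z ^ 2 :=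
  calc x ^ (2 * p) ≤ (C * z ^ (1 / p)) ^ (2 * p) := rpow_le_rpow hx h (by positivity)
    _ = C ^ (2 * p) * z ^ 2 := by
      rw [mul_rpow hC (rpow_nonneg hz _), ← rpow_mul hz, one_div_mul_eq_div,
        mul_div_cancel_right₀ _ hp.ne', rpow_two]

theorem sub_mul_setIntegral_Ioi_sq_rpow_le {Z : ℝ → ℝ} {p C t₀ a b : ℝ} (hp : 0 < p)
    (hC : 0 ≤ C) (hZ : ∀ s ∈ Ioi t₀, 0 ≤ Z s) (hL2 : IntegrableOn (fun s => Z s ^ 2) (Ioi t₀))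
    (hkey : ∀ᵐ t, t₀ ≤ t → ∫ s in Ioi t, Z s ^ 2 ≤ C * Z t ^ (1 / p))
    (ha : t₀ ≤ a) (hab : a ≤ b) :
    (b - a) * (∫ s in Ioi b, Z s ^ 2) ^ (2 * p) ≤ C ^ (2 * p) * ∫ s in Ioi a, Z s ^ 2 := by
  have htail_mono {u : ℝ} {s : Set ℝ} (hu : t₀ ≤ u) (hs : s ⊆ Ioi u) :
      ∫ x in s, Z x ^ 2 ≤ ∫ x in Ioi u, Z x ^ 2 :=
    setIntegral_mono_set (hL2.mono_set (Ioi_subset_Ioi hu))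
      (ae_of_all _ fun x => sq_nonneg (Z x)) hs.eventuallyLE
  have hlower : ∀ᵐ t ∂volume.restrict (Ioc a b),
      (∫ s in Ioi b, Z s ^ 2) ^ (2 * p) ≤ C ^ (2 * p) * Z t ^ 2 := by
    rw [ae_restrict_iff' measurableSet_Ioc]
    filter_upwards [hkey] with t hkey_t ht
    have ht₀ : t₀ ≤ t := ha.trans ht.1.le
    refine rpow_two_mul_le_of_le_mul_rpow_one_div (setIntegral_nonneg measurableSet_Ioi
      fun s _ => sq_nonneg (Z s)) (hZ t (ha.trans_lt ht.1)) hC hp ?_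
    exact (htail_mono ht₀ (Ioi_subset_Ioi ht.2)).trans (hkey_t ht₀)
  calc (b - a) * (∫ s in Ioi b, Z s ^ 2) ^ (2 * p)
      = ∫ _ in Ioc a b, (∫ s in Ioi b, Z s ^ 2) ^ (2 * p) := by
        rw [setIntegral_const, volume_real_Ioc_of_le hab, smul_eq_mul]
    _ ≤ ∫ t in Ioc a b, C ^ (2 * p) * Z t ^ 2 :=
        integral_mono_ae (integrable_const _)
          ((hL2.mono_set (Ioc_subset_Ioi_self.trans (Ioi_subset_Ioi ha))).const_mul _) hlower
    _ = C ^ (2 * p) * ∫ t in Ioc a b, Z t ^ 2 := integral_const_mul _ _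
    _ ≤ C ^ (2 * p) * ∫ s in Ioi a, Z s ^ 2 :=
        mul_le_mul_of_nonneg_left (htail_mono ha Ioc_subset_Ioi_self) (by positivity)

/-- Łojasiewicz-type integrability upgrade: if `Z ≥ 0` is measurable, square integrable on
`(τ, ∞)`, and `∫_t^∞ Z(s)² ds ≤ C Z(t)^{1/(1-ζ)}` for a.e. `t ≥ t₀` with `ζ ∈ (0, 1/2)`,
then `Z ∈ L¹(t₀, ∞)`. -/
theorem integrable_of_lojasiewicz (ζ τ : ℝ) (hζ : ζ ∈ Set.Ioo (0 : ℝ) (1 / 2))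
    (Z : ℝ → ℝ) (hmeas : Measurable Z) (hZ : ∀ s ∈ Ioi τ, 0 ≤ Z s)
    (hL2 : IntegrableOn (fun s => Z s ^ 2) (Ioi τ))
    (C t₀ : ℝ) (hC : 0 < C) (ht₀ : τ ≤ t₀)
    (hkey : ∀ᵐ t ∂(volume : Measure ℝ),
      t₀ ≤ t → ∫ s in Ioi t, Z s ^ 2 ≤ C * Z t ^ (1 / (1 - ζ))) :
    IntegrableOn Z (Ioi t₀) := by
  obtain ⟨hζ₀, hζ₁⟩ := hζ
  have hZ₀ : ∀ s ∈ Ioi t₀, 0 ≤ Z s := fun s hs => hZ s (ht₀.trans_lt hs)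
  have hL2₀ : IntegrableOn (fun s => Z s ^ 2) (Ioi t₀) := hL2.mono_set (Ioi_subset_Ioi ht₀)
  set T : ℕ → ℝ := fun k => t₀ + (2 ^ k - 1)
  have hT_le (k : ℕ) : t₀ ≤ T k := le_add_of_nonneg_right (sub_nonneg.2 (one_le_pow₀ one_le_two))
  have hT : Monotone T := fun m n h => by simpa [T] using pow_le_pow_right₀ one_le_two h
  have hT_top : Tendsto T atTop atTop :=
    tendsto_atTop_add_const_left _ _ (tendsto_atTop_add_const_right _ _
      (tendsto_pow_atTop_atTop_of_one_lt one_lt_two))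
  have hT_succ (k : ℕ) : T (k + 1) - T k = 2 ^ k := by simp only [T]; ring
  have hL2_T (k : ℕ) : IntegrableOn (fun s => Z s ^ 2) (Ioi (T k)) :=
    hL2₀.mono_set (Ioi_subset_Ioi (hT_le k))
  set x : ℕ → ℝ := fun k => ∫ s in Ioi (T k), Z s ^ 2
  have hrec (k : ℕ) : 2 ^ k * x (k + 1) ^ (2 * (1 - ζ)) ≤ C ^ (2 * (1 - ζ)) * x k := by
    simpa only [hT_succ] using sub_mul_setIntegral_Ioi_sq_rpow_le (by linarith) hC.le hZ₀ hL2₀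
      hkey (hT_le k) (hT k.le_succ)
  have hsum : Summable fun k => √(2 ^ k * x k) :=
    summable_sqrt_two_pow_mul_of_rpow_succ_le (by linarith) (by linarith) (by positivity)
      (fun k => setIntegral_nonneg measurableSet_Ioi fun s _ => sq_nonneg (Z s)) hrec
  have hnorm (k : ℕ) : ∫ s in Ioc (T k) (T (k + 1)), ‖Z s‖ ≤ √(2 ^ k * x k) := by
    simpa only [hT_succ] using setIntegral_Ioc_norm_le_sqrt (hT k.le_succ)
      hmeas.aestronglyMeasurable (hL2_T k)
  simpa [T] using integrableOn_Ioi_of_summable_integral_norm_Ioc hT hT_top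
    (fun k => integrableOn_of_integrableOn_sq measure_Ioc_lt_top.ne hmeas.aestronglyMeasurable
      ((hL2_T k).mono_set Ioc_subset_Ioi_self))
    (hsum.of_nonneg_of_le (fun k => integral_nonneg fun s => norm_nonneg (Z s)) hnorm)
end

section
/- Let (X, d) be a metric space, U a closed process on X, and 𝒟 a universe in 𝒫(X). Assume there exists a pullback 𝒟-absorbing family D̂₀ for U and that U is pullback 𝒟-asymptotically compact, and let A(t) = cl(⋃_{D̂ ∈ 𝒟} Λ(D̂, t)) with Λ(D̂, t) = ⋂_{s ≤ t} cl(⋃_{τ ≤ s} U(t, τ)D(τ)) be the associated pullback 𝒟-attractor. Then this attractor is minimal in the following sense: if Ĉ = {C(t) : t ∈ ℝ} is any family of closed subsets of X such that for every D̂ ∈ 𝒟 and every t ∈ ℝ, the Hausdorff semidistance dist_X(U(t, τ)D(τ), C(t)) tends to 0 as τ → −∞, then A(t) ⊆ C(t) for every t ∈ ℝ. -/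
/-!
Every point of `Λ(D̂, t)` is a limit of points of `U(t, τ) D(τ)` with `τ` arbitrarily negative,
and these lie arbitrarily close to `C(t)`; so `Λ(D̂, t)` lies in the closed set `C(t)`, and hence
so does the closure of their union.
-/

open Filter Set Metric

/-- With `S τ = U(t, τ) D(τ)` this is the paper's `Λ(D̂, t)`. -/
def pullbackOmegaLimit {ι α : Type*} [Preorder ι] [TopologicalSpace α] (S : ι → Set α) (t : ι) :
    Set α :=
  ⋂ s ∈ Iic t, closure (⋃ τ ∈ Iic s, S τ)

theorem infEDist_le_of_forall_mem_closure {α : Type*} [PseudoEMetricSpace α] {T C : Set α}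
    {r : ENNReal} (hT : ∀ y ∈ T, infEDist y C ≤ r) {x : α} (hx : x ∈ closure T) :
    infEDist x C ≤ r :=
  closure_minimal hT (isClosed_le continuous_infEDist continuous_const) hx

theorem infEDist_eq_zero_of_mem_pullbackOmegaLimit {ι α : Type*} [SemilatticeInf ι]
    [PseudoEMetricSpace α] {S : ι → Set α} {C : Set α} {t : ι}
    (hS : Tendsto (fun τ => ⨆ y ∈ S τ, infEDist y C) atBot (nhds 0)) {x : α}
    (hx : x ∈ pullbackOmegaLimit S t) :
    infEDist x C = 0 := by
  have : Nonempty ι := ⟨t⟩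
  refine nonpos_iff_eq_zero.1 (le_of_forall_gt_imp_ge_of_dense fun ε hε => ?_)
  obtain ⟨s, hs⟩ := eventually_atBot.1 (hS.eventually_lt_const hε)
  have hx_s : x ∈ closure (⋃ τ ∈ Iic (s ⊓ t), S τ) := mem_iInter₂.1 hx _ inf_le_right
  refine infEDist_le_of_forall_mem_closure (fun y hy => ?_) hx_s
  obtain ⟨τ, hτ, hyτ⟩ := mem_iUnion₂.1 hy
  exact (le_iSup₂ (f := fun z _ => infEDist z C) y hyτ).trans
    (hs τ (le_trans hτ inf_le_left)).le

theorem pullback_attractor_minimal_general {X : Type*} [MetricSpace X]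
    (U : ℝ → ℝ → X → X)
    (𝒟 : Set (ℝ → Set X))
    (A : ℝ → Set X)
    (hA : A = fun t =>
      closure (⋃ D ∈ 𝒟, ⋂ s ∈ Iic t, closure (⋃ τ ∈ Iic s, U t τ '' D τ)))
    (C : ℝ → Set X) (hCclosed : ∀ t : ℝ, IsClosed (C t))
    (hCattr : ∀ t : ℝ, ∀ D ∈ 𝒟,
      Tendsto (fun τ : ℝ => ⨆ x ∈ U t τ '' D τ, EMetric.infEdist x (C t))
        atBot (nhds 0)) :
    ∀ t : ℝ, A t ⊆ C t := by
  intro t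
  subst hA
  refine closure_minimal (iUnion₂_subset fun D hD x hx => ?_) (hCclosed t)
  rw [← (hCclosed t).closure_eq, mem_closure_iff_infEDist_zero]
  exact infEDist_eq_zero_of_mem_pullbackOmegaLimit (hCattr t D hD) hx

/-- Minimality of the pullback `𝒟`-attractor of a closed process: under the existence of a
pullback `𝒟`-absorbing family and pullback `𝒟`-asymptotic compactness, the attractor
`A(t) = cl(⋃_{D̂ ∈ 𝒟} Λ(D̂, t))`, with `Λ(D̂, t) = ⋂_{s ≤ t} cl(⋃_{τ ≤ s} U(t,τ)D(τ))`,
satisfies: for every family `Ĉ = {C(t)}` of closed sets that pullback attracts every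
family of `𝒟` (in the Hausdorff semi-distance, here via `infEdist`), one has
`A(t) ⊆ C(t)` for all `t`. -/
theorem pullback_attractor_minimal {X : Type*} [MetricSpace X]
    (U : ℝ → ℝ → X → X)
    (hU1 : ∀ τ : ℝ, ∀ x : X, U τ τ x = x)
    (hU2 : ∀ τ s t : ℝ, τ ≤ s → s ≤ t → ∀ x : X, U t τ x = U t s (U s τ x))
    (hclosed : ∀ τ t : ℝ, τ ≤ t → ∀ (xn : ℕ → X) (x y : X),
      Tendsto xn atTop (nhds x) →
      Tendsto (fun n => U t τ (xn n)) atTop (nhds y) →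
      U t τ x = y)
    (𝒟 : Set (ℝ → Set X)) (h𝒟ne : 𝒟.Nonempty)
    (h𝒟 : ∀ D ∈ 𝒟, ∀ t : ℝ, (D t).Nonempty)
    (D₀ : ℝ → Set X) (hD₀ne : ∀ t : ℝ, (D₀ t).Nonempty)
    (habs : ∀ D ∈ 𝒟, ∀ t : ℝ, ∃ τ₀ ≤ t, ∀ τ ≤ τ₀, U t τ '' D τ ⊆ D₀ t)
    (hcomp : ∀ t : ℝ, ∀ D ∈ 𝒟, ∀ (τn : ℕ → ℝ) (xn : ℕ → X),
      Tendsto τn atTop atBot → (∀ n, xn n ∈ D (τn n)) →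
      ∃ (φ : ℕ → ℕ) (z : X), StrictMono φ ∧
        Tendsto (fun n => U t (τn (φ n)) (xn (φ n))) atTop (nhds z))
    (A : ℝ → Set X)
    (hA : A = fun t =>
      closure (⋃ D ∈ 𝒟, ⋂ s ∈ Iic t, closure (⋃ τ ∈ Iic s, U t τ '' D τ)))
    (C : ℝ → Set X) (hCclosed : ∀ t : ℝ, IsClosed (C t))
    (hCattr : ∀ t : ℝ, ∀ D ∈ 𝒟,
      Tendsto (fun τ : ℝ => ⨆ x ∈ U t τ '' D τ, EMetric.infEdist x (C t))
        atBot (nhds 0)) :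
    ∀ t : ℝ, A t ⊆ C t :=
  pullback_attractor_minimal_general U 𝒟 A hA C hCclosed hCattr
end

section
/- Let (Ω, μ) be a finite measure space, let M ∈ ℝ, and let u ∈ L⁴(μ) be a real-valued function with ∫_Ω u dμ = M·μ(Ω). Then ∫_Ω (u³ − u)·(u − M) dμ ≥ 2·∫_Ω (u⁴/4 − u²/2) dμ − (27·M⁴/32)·μ(Ω). -/
/-!
Pointwise, `(u³ - u)(u - M) = (u⁴/2 - M u³) + 2 (u⁴/4 - u²/2) + M u`. The first summand is at
least `-27 M⁴/32` everywhere, and by the mean-value condition the last one integrates to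
`M² μ(Ω) ≥ 0`.
-/

open MeasureTheory

theorem MeasureTheory.MemLp.integrable_pow {α 𝕜 : Type*} [MeasurableSpace α] {μ : Measure α}
    [IsFiniteMeasure μ] [NormedDivisionRing 𝕜] {u : α → 𝕜} {p : ENNReal} (hu : MemLp u p μ)
    {k : ℕ} (hk : (k : ENNReal) ≤ p) : Integrable (fun x => u x ^ k) μ := by
  refine (integrable_norm_iff (hu.1.pow k)).mp ?_
  simpa only [Pi.pow_apply, norm_pow] using (hu.mono_exponent hk).integrable_norm_pow'

theorem neg_le_quartic_half_sub_mul_cube (M x : ℝ) :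
    -(27 * M ^ 4 / 32) ≤ x ^ 4 / 2 - M * x ^ 3 := by
  have hfactor : x ^ 4 / 2 - M * x ^ 3 + 27 * M ^ 4 / 32
      = (2 * x - 3 * M) ^ 2 * ((2 * x + M) ^ 2 + 2 * M ^ 2) / 32 := by ring
  have : 0 ≤ (2 * x - 3 * M) ^ 2 * ((2 * x + M) ^ 2 + 2 * M ^ 2) / 32 := by positivity
  linarith

/-- For the double-well potential `f(x) = x⁴/4 - x²/2` with `f'(x) = x³ - x`: if `u ∈ L⁴(μ)`
on a finite measure space has mean value `M` (i.e. `∫ u dμ = M μ(Ω)`), then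
`∫ f'(u)(u - M) dμ ≥ 2 ∫ f(u) dμ - (27 M⁴/32) μ(Ω)`. -/
theorem double_well_coercivity {Ω : Type*} [MeasurableSpace Ω] (μ : Measure Ω)
    [IsFiniteMeasure μ] (M : ℝ) (u : Ω → ℝ) (hu : MemLp u 4 μ)
    (hmean : ∫ x, u x ∂μ = M * (μ Set.univ).toReal) :
    ∫ x, (u x ^ 3 - u x) * (u x - M) ∂μ
      ≥ 2 * ∫ x, (u x ^ 4 / 4 - u x ^ 2 / 2) ∂μ
        - (27 * M ^ 4 / 32) * (μ Set.univ).toReal := by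
  have hu1 : Integrable u μ := by simpa using hu.integrable_pow (k := 1) (by norm_num)
  have hu2 := hu.integrable_pow (k := 2) (by norm_num)
  have hu3 := hu.integrable_pow (k := 3) (by norm_num)
  have hu4 := hu.integrable_pow (k := 4) le_rfl
  have hlow : Integrable (fun x => u x ^ 4 / 2 - M * u x ^ 3) μ :=
    (hu4.div_const 2).sub (hu3.const_mul M)
  have henergy : Integrable (fun x => u x ^ 4 / 4 - u x ^ 2 / 2) μ :=
    (hu4.div_const 4).sub (hu2.div_const 2)
  have hsplit : ∫ x, (u x ^ 3 - u x) * (u x - M) ∂μ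
      = ∫ x, (u x ^ 4 / 2 - M * u x ^ 3) ∂μ + 2 * ∫ x, (u x ^ 4 / 4 - u x ^ 2 / 2) ∂μ
        + M * ∫ x, u x ∂μ := calc
    _ = ∫ x, (u x ^ 4 / 2 - M * u x ^ 3 + 2 * (u x ^ 4 / 4 - u x ^ 2 / 2) + M * u x) ∂μ := by
      congr 1 with x
      ring
    _ = _ := by
      rw [integral_add ?_ (hu1.const_mul M), integral_add hlow (henergy.const_mul 2),
        integral_const_mul, integral_const_mul]
      exact hlow.add (henergy.const_mul 2)
  have hlow_ge : -(27 * M ^ 4 / 32) * (μ Set.univ).toReal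
      ≤ ∫ x, (u x ^ 4 / 2 - M * u x ^ 3) ∂μ := by
    simpa [mul_comm, measureReal_def] using
      integral_mono (integrable_const _) hlow fun x => neg_le_quartic_half_sub_mul_cube M (u x)
  have hmean_sq : 0 ≤ M * (M * (μ Set.univ).toReal) := by
    rw [← mul_assoc]
    exact mul_nonneg (mul_self_nonneg M) ENNReal.toReal_nonneg
  rw [hsplit, hmean]
  linarith
end

section
/- Let a < b be real numbers. For each n ∈ ℕ let Jₙ : [a, b] → ℝ be a nonincreasing function, and let J : [a, b] → ℝ be a continuous function such that Jₙ(s) → J(s) as n → ∞ for almost every s ∈ (a, b). Let (tₙ) be a sequence in [a, b] converging to some t* ∈ (a, b]. Then limsup_{n→∞} Jₙ(tₙ) ≤ J(t*). -/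
open MeasureTheory Filter Set

/-- Monotonicity/a.e.-convergence lemma for the energy-functional method: if each `Jₙ` is
nonincreasing on `[a, b]`, `J` is continuous on `[a, b]`, `Jₙ → J` a.e. on `(a, b)`, and
`tₙ ∈ [a, b]` converges to `t* ∈ (a, b]`, then `limsup_{n} Jₙ(tₙ) ≤ J(t*)`. -/
theorem limsup_le_of_antitone_ae_tendsto (a b : ℝ) (hab : a < b)
    (J' : ℕ → ℝ → ℝ) (J : ℝ → ℝ)
    (hmono : ∀ n : ℕ, AntitoneOn (J' n) (Icc a b))
    (hcont : ContinuousOn J (Icc a b))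
    (hae : ∀ᵐ s ∂(volume.restrict (Ioo a b)),
      Tendsto (fun n => J' n s) atTop (nhds (J s)))
    (t : ℕ → ℝ) (ht : ∀ n, t n ∈ Icc a b)
    (tstar : ℝ) (htstar : tstar ∈ Ioc a b)
    (htconv : Tendsto t atTop (nhds tstar)) :
    limsup (fun n => ((J' n (t n) : ℝ) : EReal)) atTop ≤ ((J tstar : ℝ) : EReal) := by
  obtain ⟨hat, htb⟩ := htstar
  have key : ∀ s, a < s → s < tstar → Tendsto (fun n => J' n s) atTop (nhds (J s)) →
      limsup (fun n => ((J' n (t n) : ℝ) : EReal)) atTop ≤ ((J s : ℝ) : EReal) := by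
    intro s has hst hs
    have hsb : s ∈ Icc a b := ⟨has.le, hst.le.trans htb⟩
    have hev : ∀ᶠ n in atTop, ((J' n (t n) : ℝ) : EReal) ≤ ((J' n s : ℝ) : EReal) := by
      filter_upwards [htconv.eventually (eventually_gt_nhds hst)] with n hn
      exact_mod_cast hmono n hsb (ht n) hn.le
    calc limsup (fun n => ((J' n (t n) : ℝ) : EReal)) atTop
        ≤ limsup (fun n => ((J' n s : ℝ) : EReal)) atTop := limsup_le_limsup hev
      _ = ((J s : ℝ) : EReal) := (EReal.tendsto_coe.2 hs).limsup_eq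
  have main : ∀ ε : ℝ, 0 < ε →
      limsup (fun n => ((J' n (t n) : ℝ) : EReal)) atTop ≤ ((J tstar + ε : ℝ) : EReal) := by
    intro ε hε
    have hcw : ContinuousWithinAt J (Icc a b) tstar := hcont tstar ⟨hat.le, htb⟩
    obtain ⟨δ, hδ, hδ'⟩ := Metric.continuousWithinAt_iff.1 hcw ε hε
    set c := max a (tstar - δ) with hc_def
    have hc : c < tstar := max_lt hat (by linarith)
    have hac : a ≤ c := le_max_left _ _
    have hsubset : Ioo c tstar ⊆ Ioo a b := fun x hx =>
      ⟨lt_of_le_of_lt hac hx.1, lt_of_lt_of_le hx.2 htb⟩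
    have hexists : ∃ s ∈ Ioo c tstar, Tendsto (fun n => J' n s) atTop (nhds (J s)) := by
      by_contra h
      push_neg at h
      have hsub : Ioo c tstar ⊆ {s | ¬ Tendsto (fun n => J' n s) atTop (nhds (J s))} :=
        fun s hs => h s hs
      have h0 : volume.restrict (Ioo a b) (Ioo c tstar) = 0 :=
        measure_mono_null hsub (ae_iff.1 hae)
      rw [Measure.restrict_apply measurableSet_Ioo,
        inter_eq_self_of_subset_left hsubset, Real.volume_Ioo] at h0
      simp only [ENNReal.ofReal_eq_zero] at h0
      linarith
    obtain ⟨s, hs, hP⟩ := hexists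
    have hsa : a < s := lt_of_le_of_lt hac hs.1
    have hsb : s ∈ Icc a b := ⟨hsa.le, hs.2.le.trans htb⟩
    have hdist : dist s tstar < δ := by
      rw [Real.dist_eq, abs_lt]
      have : tstar - δ ≤ c := le_max_right _ _
      constructor <;> [linarith [hs.1, hs.2]; linarith [hs.2]]
    have hJs : J s < J tstar + ε := by
      have := hδ' hsb hdist
      rw [Real.dist_eq, abs_lt] at this
      linarith [this.1]
    calc limsup (fun n => ((J' n (t n) : ℝ) : EReal)) atTop
        ≤ ((J s : ℝ) : EReal) := key s hsa hs.2 hP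
      _ ≤ ((J tstar + ε : ℝ) : EReal) := by exact_mod_cast hJs.le
  by_contra h
  push_neg at h
  obtain ⟨z, hz1, hz2⟩ := EReal.exists_between_coe_real h
  have hε : (0 : ℝ) < z - J tstar := by
    have : (J tstar : ℝ) < z := by exact_mod_cast hz1
    linarith
  have := main (z - J tstar) hε
  rw [show J tstar + (z - J tstar) = z by ring] at this
  exact absurd (lt_of_lt_of_le hz2 this) (lt_irrefl _)
end

section
/- Let τ ∈ ℝ, γ > 0, and ω ∈ [1/2, 1). Let f, g : [τ, ∞) → ℝ be nonnegative functions and let y be a differentiable function on [τ, ∞) with y(t) ≥ 1 for all t ≥ τ satisfying y′(t) + γ·y(t) ≤ f(t)·y(t)^{ω} + g(t) for every t ≥ τ. Then the function φ(t) = y(t)^{ω} is differentiable on [τ, ∞) and satisfies φ′(t) + (γ/2)·φ(t) ≤ f(t)·φ(t)^{2 − 1/ω} + ω·g(t) for every t ≥ τ. -/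
open Set Real

/-- Substitution step in the generalized Gronwall lemma: if `y ≥ 1` is differentiable and
satisfies `y' + γ y ≤ f y^ω + g` on `[τ, ∞)` with `ω ∈ [1/2, 1)` and nonnegative `f, g`,
then `φ = y^ω` is differentiable and satisfies
`φ' + (γ/2) φ ≤ f φ^{2 - 1/ω} + ω g` on `[τ, ∞)`. -/
theorem gronwall_substitution (τ γ ω : ℝ) (hγ : 0 < γ)
    (hω : ω ∈ Set.Ico (1 / 2 : ℝ) 1)
    (f g y y' : ℝ → ℝ)
    (hf : ∀ t ∈ Ici τ, 0 ≤ f t) (hg : ∀ t ∈ Ici τ, 0 ≤ g t)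
    (hy1 : ∀ t ∈ Ici τ, 1 ≤ y t)
    (hderiv : ∀ t ∈ Ici τ, HasDerivAt y (y' t) t)
    (hineq : ∀ t ∈ Ici τ, y' t + γ * y t ≤ f t * y t ^ ω + g t) :
    ∀ t ∈ Ici τ, ∃ φ' : ℝ,
      HasDerivAt (fun s => y s ^ ω) φ' t ∧
      φ' + (γ / 2) * y t ^ ω ≤ f t * (y t ^ ω) ^ (2 - 1 / ω) + ω * g t := by
  intro t ht
  obtain ⟨hω1, hω2⟩ := hω
  have hy := hy1 t ht
  have hypos : 0 < y t := lt_of_lt_of_le one_pos hy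
  have hyne : y t ≠ 0 := ne_of_gt hypos
  have hωpos : 0 < ω := lt_of_lt_of_le (by norm_num) hω1
  refine ⟨y' t * ω * y t ^ (ω - 1),
    (hderiv t ht).rpow_const (Or.inl hyne), ?_⟩
  have hkey : (y t ^ ω) ^ (2 - 1 / ω) = y t ^ (2 * ω - 1) := by
    rw [← Real.rpow_mul hypos.le]
    congr 1
    field_simp
  rw [hkey]
  set a := y t ^ (ω - 1) with ha
  set b := y t ^ ω with hb
  set c := y t ^ (2 * ω - 1) with hc
  have hab : a * b = c := by
    rw [ha, hb, hc, ← Real.rpow_add hypos]; ring_nf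
  have hay : a * y t = b := by
    rw [ha, hb, ← Real.rpow_add_one hyne]; ring_nf
  have ha1 : a ≤ 1 := Real.rpow_le_one_of_one_le_of_nonpos hy (by linarith)
  have ha0 : 0 ≤ a := Real.rpow_nonneg hypos.le _
  have hb0 : 0 ≤ b := Real.rpow_nonneg hypos.le _
  have hc0 : 0 ≤ c := Real.rpow_nonneg hypos.le _
  have hft := hf t ht
  have hgt := hg t ht
  have h := hineq t ht
  have hmul : ω * a * (y' t + γ * y t) ≤ ω * a * (f t * b + g t) :=
    mul_le_mul_of_nonneg_left h (by positivity)
  have h1 : ω * a * y' t + ω * γ * b ≤ ω * f t * c + ω * g t * a := by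
    have e1 : ω * a * (y' t + γ * y t) = ω * a * y' t + ω * γ * (a * y t) := by ring
    have e2 : ω * a * (f t * b + g t) = ω * f t * (a * b) + ω * g t * a := by ring
    rw [e1, e2, hab, hay] at hmul
    linarith
  nlinarith [h1, mul_nonneg (mul_nonneg (sub_nonneg.2 hω2.le) hft) hc0,
    mul_nonneg (mul_nonneg hωpos.le hgt) (sub_nonneg.2 ha1),
    mul_nonneg (mul_nonneg hγ.le (by linarith : (0:ℝ) ≤ ω - 1/2)) hb0]
end
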